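/- arXiv:2511.10331 — 10 statements merged into one kernel-verified Lean document; each statement's English description precedes it below -/
import Mathlib

section
/- Let X be a one-point metric space and let (X_n) be a sequence of finite positive definite metric spaces, each having exactly four points, converging to X in Gromov–Hausdorff distance (equivalently, diam X_n → 0). Then lim_{n→∞} |X_n| = 1 = |X|. -/
open Filter Metric

/-- The zeta (similarity) matrix of a finite metric space. -/
noncomputable def zetaM {α : Type*} [Fintype α] (M : MetricSpace α) : Matrix α α ℝ :=
  Matrix.of fun x y => Real.exp (-(M.toPseudoMetricSpace.toDist.dist x y))

/-- The magnitude of a finite (positive definite) metric space: the sum of the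
entries of the inverse of its zeta matrix. -/
noncomputable def magnitudeM {α : Type*} [Fintype α] (M : MetricSpace α) : ℝ := by
  classical exact ∑ x, ∑ y, (zetaM M)⁻¹ x y

/-- The Gromov–Hausdorff distance between two (nonempty compact) metric spaces,
with the metric structures given explicitly. -/
noncomputable def ghDistM {α β : Type*} (M : MetricSpace α) (N : MetricSpace β) : ℝ := by
  classical
  letI := M; letI := N
  exact if h : Nonempty α ∧ Nonempty β ∧ CompactSpace α ∧ CompactSpace β then
    @GromovHausdorff.ghDist α β M h.1 h.2.2.1 N h.2.1 h.2.2.2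
  else 0

/-!
Let `Z` be the zeta matrix of a finite positive definite space and `w` its weighting, `Z w = 1`,
so that the magnitude is `s = ∑ w`. Positivity of `Z` at `w - δₓ` gives `s ≥ 1`. Writing
`Z = J - F` with `F = 1 - e^{-d}`, again a metric, the weighting equation reads `F w = (s - 1) 1`.
A four-point metric is a nonnegative combination of cut metrics, and Cauchy–Schwarz over the cuts
gives `((F 1) ⬝ u)² ≤ (1 ⬝ F 1) · (-u ⬝ F u)` whenever `∑ u = 0`. Applied to `u = 4 w - s 1` this
yields `s (16 - 2 (1 ⬝ F 1)) ≤ 16`, and `1 ⬝ F 1 ≤ 16 diam X ≤ 32 d_GH(X, pt)` tends to `0`.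
-/

open Matrix

section Magnitude

variable {α : Type*} [Fintype α] [MetricSpace α]

lemma zetaM_isSymm : (zetaM ‹MetricSpace α›).IsSymm :=
  IsSymm.ext fun x y => by simp [zetaM, dist_comm]

lemma zetaM_self (x : α) : zetaM ‹MetricSpace α› x x = 1 := by
  simp [zetaM]

lemma exists_weighting_sum_eq_magnitudeM (hpd : (zetaM ‹MetricSpace α›).PosDef) :
    ∃ w : α → ℝ, zetaM ‹MetricSpace α› *ᵥ w = 1 ∧
      magnitudeM ‹MetricSpace α› = ∑ x, w x := by
  classical
  refine ⟨(zetaM ‹MetricSpace α›)⁻¹ *ᵥ 1, ?_, ?_⟩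
  · rw [mulVec_mulVec, mul_nonsing_inv _ hpd.det_pos.ne'.isUnit, one_mulVec]
  · simp [magnitudeM, mulVec, dotProduct]

lemma one_le_magnitudeM [Nonempty α] (hpd : (zetaM ‹MetricSpace α›).PosDef) :
    1 ≤ magnitudeM ‹MetricSpace α› := by
  classical
  obtain ⟨w, hw, hmag⟩ := exists_weighting_sum_eq_magnitudeM hpd
  obtain ⟨x⟩ := ‹Nonempty α›
  have h := hpd.posSemidef.dotProduct_mulVec_nonneg (w - Pi.single x 1)
  have hwx : w ⬝ᵥ (zetaM ‹MetricSpace α›).col x = 1 := by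
    have hx := congrFun hw x
    rwa [← zetaM_isSymm.eq, mulVec_transpose] at hx
  simp only [star_trivial, mulVec_sub, hw, mulVec_single_one, dotProduct_sub, sub_dotProduct,
    dotProduct_one, single_dotProduct, Pi.sub_apply, Finset.sum_sub_distrib,
    Finset.sum_pi_single', Finset.mem_univ, if_true, one_mul, col_apply, zetaM_self, hwx] at h
  linarith

end Magnitude

lemma mul_sub_le_card_sq_of_sq_dotProduct_le {α : Type*} [Fintype α] {F : Matrix α α ℝ}
    (hF : F.IsSymm) {C : ℝ} (hC : 0 ≤ C)
    (hneg : ∀ u : α → ℝ, ∑ x, u x = 0 → ((F *ᵥ 1) ⬝ᵥ u) ^ 2 ≤ C * -(u ⬝ᵥ F *ᵥ u))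
    {w : α → ℝ} {s : ℝ} (hs : 0 ≤ s) (hsum : ∑ x, w x = s)
    (hFw : F *ᵥ w = (s - 1) • 1) :
    s * ((Fintype.card α : ℝ) ^ 2 - 1 ⬝ᵥ F *ᵥ 1 - C) ≤ (Fintype.card α : ℝ) ^ 2 := by
  set n : ℝ := (Fintype.card α : ℝ)
  set σ := 1 ⬝ᵥ F *ᵥ 1
  have h1 : (1 : α → ℝ) ⬝ᵥ 1 = n := by simp [n]
  have hF1w : (F *ᵥ 1) ⬝ᵥ w = n * (s - 1) := by
    rw [dotProduct_comm, dotProduct_mulVec, ← mulVec_transpose, hF.eq, hFw, smul_dotProduct, h1,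
      smul_eq_mul, mul_comm]
  set u : α → ℝ := n • w - s • 1
  have hu : ∑ x, u x = 0 := by
    rw [← dotProduct_one, sub_dotProduct, smul_dotProduct, smul_dotProduct, dotProduct_one, hsum,
      h1, smul_eq_mul, smul_eq_mul, mul_comm, sub_self]
  have ht : (F *ᵥ 1) ⬝ᵥ u = n ^ 2 * (s - 1) - s * σ := by
    simp only [u, dotProduct_sub, dotProduct_smul, hF1w, smul_eq_mul,
      dotProduct_comm _ (1 : α → ℝ), σ]
    ring
  have hq : u ⬝ᵥ F *ᵥ u = - s * ((F *ᵥ 1) ⬝ᵥ u) := by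
    have hFu : F *ᵥ u = (n * (s - 1)) • 1 - s • (F *ᵥ 1) := by
      simp only [u, mulVec_sub, mulVec_smul, hFw, smul_smul]
    rw [hFu, dotProduct_sub, dotProduct_smul, dotProduct_smul, dotProduct_one, hu,
      dotProduct_comm u, smul_eq_mul, smul_eq_mul]
    ring
  have key := hneg u hu
  rw [hq, ht] at key
  rcases le_or_gt (n ^ 2 * (s - 1) - s * σ) 0 with ht0 | ht0
  · nlinarith [mul_nonneg hs hC]
  · nlinarith

lemma sq_le_of_cut_decomposition {f12 f13 f14 f23 f24 f34 v1 v2 v3 v4 l1 l2 l3 l4 m1 m2 : ℝ}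
    (hl1 : 0 ≤ l1) (hl2 : 0 ≤ l2) (hl3 : 0 ≤ l3) (hl4 : 0 ≤ l4) (hm1 : 0 ≤ m1) (hm2 : 0 ≤ m2)
    (e12 : f12 = l1 + l2 + m1 + m2) (e34 : f34 = l3 + l4 + m1 + m2)
    (e13 : f13 = l1 + l3 + m2) (e24 : f24 = l2 + l4 + m2)
    (e14 : f14 = l1 + l4 + m1) (e23 : f23 = l2 + l3 + m1)
    (hv : v1 + v2 + v3 + v4 = 0) :
    ((f12 + f13 + f14) * v1 + (f12 + f23 + f24) * v2 + (f13 + f23 + f34) * v3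
        + (f14 + f24 + f34) * v4) ^ 2
      ≤ (2 * (f12 + f13 + f14 + f23 + f24 + f34)) *
        -(2 * (f12 * v1 * v2 + f13 * v1 * v3 + f14 * v1 * v4 + f23 * v2 * v3 + f24 * v2 * v4
          + f34 * v3 * v4)) := by
  -- `f = ∑ lᵢ δ_{i} + m₁ δ_{13} + m₂ δ_{14}` in cut metrics `δ_S`; as `∑ v = 0`, the cut
  -- `δ_S` contributes `(4 - 2 |S|) v(S)` to the left factor and `2 v(S)²` to the quadratic form
  set L := l1 + l2 + l3 + l4
  set U := l1 * v1 ^ 2 + l2 * v2 ^ 2 + l3 * v3 ^ 2 + l4 * v4 ^ 2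
  have ht : (f12 + f13 + f14) * v1 + (f12 + f23 + f24) * v2 + (f13 + f23 + f34) * v3
      + (f14 + f24 + f34) * v4 = 2 * (l1 * v1 + l2 * v2 + l3 * v3 + l4 * v4) := by
    subst e12 e34 e13 e24 e14 e23
    linear_combination (L + 2 * m1 + 2 * m2) * hv
  have hq : -(2 * (f12 * v1 * v2 + f13 * v1 * v3 + f14 * v1 * v4 + f23 * v2 * v3
      + f24 * v2 * v4 + f34 * v3 * v4)) = 2 * (U + m1 * (v1 + v3) ^ 2 + m2 * (v1 + v4) ^ 2) := by
    subst e12 e34 e13 e24 e14 e23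
    linear_combination (-2 * (l1 * v1 + l2 * v2 + l3 * v3 + l4 * v4 + m1 * (v1 + v3)
      + m2 * (v1 + v4))) * hv
  have hσ : 2 * (f12 + f13 + f14 + f23 + f24 + f34) = 6 * L + 8 * (m1 + m2) := by
    subst e12 e34 e13 e24 e14 e23
    ring
  have hCS : (l1 * v1 + l2 * v2 + l3 * v3 + l4 * v4) ^ 2 ≤ L * U := by
    have := Finset.sum_sq_le_sum_mul_sum_of_sq_le_mul Finset.univ
      (r := fun i : Fin 4 => ![l1, l2, l3, l4] i * ![v1, v2, v3, v4] i)
      (f := ![l1, l2, l3, l4]) (g := fun i => ![l1, l2, l3, l4] i * ![v1, v2, v3, v4] i ^ 2)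
      (by intro i _; fin_cases i <;> simpa)
      (by intro i _; fin_cases i <;> simp <;> positivity)
      (fun i _ => le_of_eq (by ring))
    simpa [Fin.sum_univ_four, L, U] using this
  rw [ht, hq, hσ]
  have hL : 0 ≤ L := by positivity
  have hU : 0 ≤ U := by positivity
  have hm : 0 ≤ m1 * (v1 + v3) ^ 2 + m2 * (v1 + v4) ^ 2 := by positivity
  linarith [mul_nonneg hL hU, mul_nonneg hL hm, mul_nonneg (add_nonneg hm1 hm2) hU,
    mul_nonneg (add_nonneg hm1 hm2) hm]

lemma exists_equiv_fin_four_pairing_le {α : Type*} [Fintype α] (hcard : Fintype.card α = 4)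
    {f : α → α → ℝ} (hf : ∀ x y, f x y = f y x) :
    ∃ e : Fin 4 ≃ α, f (e 0) (e 2) + f (e 1) (e 3) ≤ f (e 0) (e 1) + f (e 2) (e 3) ∧
      f (e 0) (e 3) + f (e 1) (e 2) ≤ f (e 0) (e 1) + f (e 2) (e 3) := by
  obtain ⟨e⟩ : Nonempty (Fin 4 ≃ α) := by rw [← Fintype.card_eq, Fintype.card_fin, hcard]
  rcases le_total (f (e 0) (e 2) + f (e 1) (e 3)) (f (e 0) (e 1) + f (e 2) (e 3)) with h2 | h2 <;>
  rcases le_total (f (e 0) (e 3) + f (e 1) (e 2)) (f (e 0) (e 1) + f (e 2) (e 3)) with h3 | h3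
  · exact ⟨e, h2, h3⟩
  all_goals
    rcases le_total (f (e 0) (e 3) + f (e 1) (e 2)) (f (e 0) (e 2) + f (e 1) (e 3)) with h | h
  all_goals first
    | refine ⟨(Equiv.swap 1 2).trans e, ?_, ?_⟩ <;>
        simp only [Equiv.trans_apply, ne_eq, Fin.reduceEq, not_false_eq_true,
          Equiv.swap_apply_of_ne_of_ne, Equiv.swap_apply_left, Equiv.swap_apply_right] <;>
        linarith [hf (e 2) (e 1), hf (e 3) (e 1), hf (e 3) (e 2)]
    | refine ⟨(Equiv.swap 1 3).trans e, ?_, ?_⟩ <;>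
        simp only [Equiv.trans_apply, ne_eq, Fin.reduceEq, not_false_eq_true,
          Equiv.swap_apply_of_ne_of_ne, Equiv.swap_apply_left, Equiv.swap_apply_right] <;>
        linarith [hf (e 2) (e 1), hf (e 3) (e 1), hf (e 3) (e 2)]

lemma sq_mulVec_one_dotProduct_le_of_card_eq_four {α : Type*} [Fintype α]
    (hcard : Fintype.card α = 4) {F : Matrix α α ℝ} (hF : F.IsSymm) (hdiag : ∀ x, F x x = 0)
    (htri : ∀ x y z, F x z ≤ F x y + F y z) {u : α → ℝ} (hu : ∑ x, u x = 0) :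
    ((F *ᵥ 1) ⬝ᵥ u) ^ 2 ≤ (1 ⬝ᵥ F *ᵥ 1) * -(u ⬝ᵥ F *ᵥ u) := by
  -- with this labelling the cut `{e 0, e 1} | {e 2, e 3}` is not needed in the cut decomposition
  obtain ⟨e, h02, h03⟩ := exists_equiv_fin_four_pairing_le hcard fun x y => (hF.apply x y).symm
  have hsum : ∀ g : α → ℝ, ∑ x, g x = g (e 0) + g (e 1) + g (e 2) + g (e 3) := fun g => by
    rw [← e.sum_comp, Fin.sum_univ_four]
  simp only [dotProduct, mulVec, Pi.one_apply, mul_one, one_mul, hsum, hdiag] at hu ⊢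
  simp only [hF.apply (e 0) (e 1), hF.apply (e 0) (e 2), hF.apply (e 0) (e 3),
    hF.apply (e 1) (e 2), hF.apply (e 1) (e 3), hF.apply (e 2) (e 3)]
  have key := sq_le_of_cut_decomposition (f12 := F (e 0) (e 1)) (f13 := F (e 0) (e 2))
    (f14 := F (e 0) (e 3)) (f23 := F (e 1) (e 2)) (f24 := F (e 1) (e 3)) (f34 := F (e 2) (e 3))
    (v1 := u (e 0)) (v2 := u (e 1)) (v3 := u (e 2)) (v4 := u (e 3))
    (l1 := (F (e 0) (e 2) + F (e 0) (e 3) - F (e 2) (e 3)) / 2)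
    (l2 := (F (e 1) (e 2) + F (e 1) (e 3) - F (e 2) (e 3)) / 2)
    (l3 := (F (e 0) (e 2) + F (e 1) (e 2) - F (e 0) (e 1)) / 2)
    (l4 := (F (e 0) (e 3) + F (e 1) (e 3) - F (e 0) (e 1)) / 2)
    (m1 := (F (e 0) (e 1) + F (e 2) (e 3) - F (e 0) (e 2) - F (e 1) (e 3)) / 2)
    (m2 := (F (e 0) (e 1) + F (e 2) (e 3) - F (e 0) (e 3) - F (e 1) (e 2)) / 2)
    (by linarith [htri (e 2) (e 0) (e 3), hF.apply (e 0) (e 2)])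
    (by linarith [htri (e 2) (e 1) (e 3), hF.apply (e 1) (e 2)])
    (by linarith [htri (e 0) (e 2) (e 1), hF.apply (e 1) (e 2)])
    (by linarith [htri (e 0) (e 3) (e 1), hF.apply (e 1) (e 3)])
    (by linarith) (by linarith) (by ring) (by ring) (by ring) (by ring) (by ring) (by ring) hu
  linear_combination key

section OneSubZeta

variable {α : Type*} [Fintype α] [MetricSpace α]

noncomputable def oneSubZetaM (M : MetricSpace α) : Matrix α α ℝ :=
  Matrix.of fun x y => 1 - zetaM M x y

lemma oneSubZetaM_isSymm : (oneSubZetaM ‹MetricSpace α›).IsSymm :=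
  IsSymm.ext fun x y => by simp [oneSubZetaM, zetaM_isSymm.apply x y]

lemma oneSubZetaM_self (x : α) : oneSubZetaM ‹MetricSpace α› x x = 0 := by
  simp [oneSubZetaM, zetaM_self]

lemma oneSubZetaM_nonneg (x y : α) : 0 ≤ oneSubZetaM ‹MetricSpace α› x y := by
  simp [oneSubZetaM, zetaM, dist_nonneg]

lemma oneSubZetaM_le_dist (x y : α) : oneSubZetaM ‹MetricSpace α› x y ≤ dist x y := by
  simpa [oneSubZetaM, zetaM, add_comm, sub_le_iff_le_add] using Real.add_one_le_exp (-dist x y)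

lemma oneSubZetaM_triangle (x y z : α) :
    oneSubZetaM ‹MetricSpace α› x z ≤
      oneSubZetaM ‹MetricSpace α› x y + oneSubZetaM ‹MetricSpace α› y z := by
  have hxy : Real.exp (-dist x y) ≤ 1 := by simp [dist_nonneg]
  have hyz : Real.exp (-dist y z) ≤ 1 := by simp [dist_nonneg]
  have hxz : Real.exp (-dist x y) * Real.exp (-dist y z) ≤ Real.exp (-dist x z) := by
    rw [← Real.exp_add]
    exact Real.exp_le_exp.mpr (by linarith [dist_triangle x y z])
  simp only [oneSubZetaM, zetaM, of_apply]
  nlinarith [mul_nonneg (sub_nonneg.mpr hxy) (sub_nonneg.mpr hyz)]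

lemma oneSubZetaM_mulVec {w : α → ℝ} (hw : zetaM ‹MetricSpace α› *ᵥ w = 1) :
    oneSubZetaM ‹MetricSpace α› *ᵥ w = ((∑ x, w x) - 1) • 1 := by
  ext x
  have hx := congrFun hw x
  simp only [mulVec, dotProduct, oneSubZetaM, of_apply, sub_mul, one_mul,
    Finset.sum_sub_distrib] at hx ⊢
  simp [hx]

lemma magnitudeM_mul_le_of_card_eq_four (hcard : Fintype.card α = 4)
    (hpd : (zetaM ‹MetricSpace α›).PosDef) {δ : ℝ} (hδ : ∀ x y : α, dist x y ≤ δ) :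
    magnitudeM ‹MetricSpace α› * (16 - 32 * δ) ≤ 16 := by
  have : Nonempty α := Fintype.card_pos_iff.mp (by omega)
  obtain ⟨w, hw, hmag⟩ := exists_weighting_sum_eq_magnitudeM hpd
  have hone := one_le_magnitudeM hpd
  set F := oneSubZetaM ‹MetricSpace α›
  have hσ : 1 ⬝ᵥ F *ᵥ 1 = ∑ x, ∑ y, F x y := by simp [dotProduct, mulVec]
  have hσ0 : 0 ≤ 1 ⬝ᵥ F *ᵥ 1 :=
    hσ ▸ Finset.sum_nonneg fun x _ => Finset.sum_nonneg fun y _ => oneSubZetaM_nonneg x y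
  have hσδ : 1 ⬝ᵥ F *ᵥ 1 ≤ 16 * δ := by
    calc 1 ⬝ᵥ F *ᵥ 1 ≤ ∑ _x : α, ∑ _y : α, δ :=
          hσ ▸ Finset.sum_le_sum fun x _ => Finset.sum_le_sum fun y _ =>
            (oneSubZetaM_le_dist x y).trans (hδ x y)
      _ = 16 * δ := by simp [hcard]; ring
  have key := mul_sub_le_card_sq_of_sq_dotProduct_le oneSubZetaM_isSymm hσ0
    (fun u hu => sq_mulVec_one_dotProduct_le_of_card_eq_four hcard oneSubZetaM_isSymm
      oneSubZetaM_self oneSubZetaM_triangle hu)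
    (by linarith) hmag.symm (hmag ▸ oneSubZetaM_mulVec hw)
  rw [hcard] at key
  push_cast at key
  nlinarith

end OneSubZeta

lemma magnitudeM_punit : magnitudeM (inferInstance : MetricSpace PUnit) = 1 := by
  simp [magnitudeM, zetaM]

lemma dist_le_two_mul_ghDistM_punit {α : Type*} [MetricSpace α] [Finite α] [Nonempty α]
    (x y : α) :
    dist x y ≤ 2 * ghDistM ‹MetricSpace α› (inferInstance : MetricSpace PUnit) := by
  have hgh : ghDistM ‹MetricSpace α› (inferInstance : MetricSpace PUnit) =
      GromovHausdorff.ghDist α PUnit := by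
    simp only [ghDistM]
    rw [dif_pos ⟨‹_›, ⟨PUnit.unit⟩, inferInstance, inferInstance⟩]
  obtain ⟨Φ, Ψ, hΦ, hΨ, hd⟩ := GromovHausdorff.ghDist_eq_hausdorffDist α PUnit
  have hrange : Set.range Ψ = {Ψ PUnit.unit} := Set.range_unique
  have hbdd : Metric.hausdorffEDist (Set.range Φ) (Set.range Ψ) ≠ ⊤ :=
    Metric.hausdorffEDist_ne_top_of_nonempty_of_bounded (Set.range_nonempty _)
      (Set.range_nonempty _) (isCompact_range hΦ.continuous).isBounded
      (isCompact_range hΨ.continuous).isBounded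
  have hclose (z : α) : dist (Φ z) (Ψ PUnit.unit) ≤ GromovHausdorff.ghDist α PUnit := by
    rw [hd, ← Metric.infDist_singleton, ← hrange]
    exact Metric.infDist_le_hausdorffDist_of_mem (Set.mem_range_self z) hbdd
  rw [hgh, ← hΦ.dist_eq]
  linarith [dist_triangle_right (Φ x) (Φ y) (Ψ PUnit.unit), hclose x, hclose y]

theorem magnitude_tendsto_one_of_four_points_general
    (Xn : ℕ → Type*) [∀ n, Fintype (Xn n)]
    (Mn : ∀ n, MetricSpace (Xn n))
    (hcard : ∀ n, Fintype.card (Xn n) = 4)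
    (hpd : ∀ n, (zetaM (Mn n)).PosDef)
    (hGH : Tendsto (fun n => ghDistM (Mn n) (inferInstance : MetricSpace PUnit))
      atTop (nhds 0)) :
    Tendsto (fun n => magnitudeM (Mn n)) atTop (nhds 1) ∧
      magnitudeM (inferInstance : MetricSpace PUnit) = 1 := by
  refine ⟨?_, magnitudeM_punit⟩
  set g := fun n => ghDistM (Mn n) (inferInstance : MetricSpace PUnit)
  have hne (n : ℕ) : Nonempty (Xn n) := Fintype.card_pos_iff.mp (by rw [hcard n]; norm_num)
  have hlower (n : ℕ) : 1 ≤ magnitudeM (Mn n) := by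
    let _ := Mn n
    exact one_le_magnitudeM (hpd n)
  have hupper : ∀ᶠ n in atTop, magnitudeM (Mn n) ≤ 16 / (16 - 64 * g n) := by
    filter_upwards [hGH.eventually_lt_const (by norm_num : (0 : ℝ) < 1 / 4)] with n hn
    let _ := Mn n
    rw [le_div_iff₀ (by linarith)]
    have h := magnitudeM_mul_le_of_card_eq_four (hcard n) (hpd n)
      fun x y => dist_le_two_mul_ghDistM_punit x y
    linarith
  have hbound : Tendsto (fun n => 16 / (16 - 64 * g n)) atTop (nhds 1) := by
    simpa [Pi.div_def] using (tendsto_const_nhds (x := (16 : ℝ))).div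
      (tendsto_const_nhds.sub (hGH.const_mul 64)) (by norm_num : (16 : ℝ) - 64 * 0 ≠ 0)
  exact tendsto_of_tendsto_of_tendsto_of_le_of_le' tendsto_const_nhds hbound
    (Eventually.of_forall hlower) hupper

/-- If `X` is a one-point metric space (modelled by `PUnit`) and `(X_n)` is a sequence of
finite positive definite metric spaces, each with exactly four points, converging to `X`
in Gromov–Hausdorff distance, then `|X_n| → 1 = |X|`. -/
theorem magnitude_tendsto_one_of_four_points
    (Xn : ℕ → Type*) [∀ n, Fintype (Xn n)] [∀ n, Nonempty (Xn n)]
    (Mn : ∀ n, MetricSpace (Xn n))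
    (hcard : ∀ n, Fintype.card (Xn n) = 4)
    (hpd : ∀ n, (zetaM (Mn n)).PosDef)
    (hGH : Tendsto (fun n => ghDistM (Mn n) (inferInstance : MetricSpace PUnit))
      atTop (nhds 0)) :
    Tendsto (fun n => magnitudeM (Mn n)) atTop (nhds 1) ∧
      magnitudeM (inferInstance : MetricSpace PUnit) = 1 :=
  magnitude_tendsto_one_of_four_points_general Xn Mn hcard hpd hGH
end

section
/- Let y₁,…,y_k be linearly independent unit vectors in ℝ^k and let G = (yᵢ·yⱼ)_{1≤i,j≤k} be their Gram matrix. Then the points y₁,…,y_k are affinely independent, their circumradius ρ (the radius of the unique sphere in the affine span of {y₁,…,y_k} passing through all of them) satisfies ρ < 1, and the sum of all entries of the inverse matrix G⁻¹ equals 1/(1−ρ²). -/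
open Metric

noncomputable section

/-- A point `c` and a radius `ρ` form a circumsphere of the set `Y` if `c` lies in the
affine span of `Y` and every point of `Y` is at distance `ρ` from `c`. -/
def IsCircum {E : Type*} [NormedAddCommGroup E] [InnerProductSpace ℝ E]
    (Y : Set E) (c : E) (ρ : ℝ) : Prop :=
  c ∈ affineSpan ℝ Y ∧ ∀ y ∈ Y, dist c y = ρ

open Classical in
/-- The circumcenter and circumradius of a subset of a Euclidean space (junk value if no
circumsphere exists). -/
noncomputable def circumData {E : Type*} [NormedAddCommGroup E] [InnerProductSpace ℝ E]
    (Y : Set E) : E × ℝ :=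
  if h : ∃ p : E × ℝ, IsCircum Y p.1 p.2 ∧ 0 ≤ p.2 then h.choose else (0, 0)

/-- The circumradius of a subset of a Euclidean space. -/
noncomputable def circumradius {E : Type*} [NormedAddCommGroup E] [InnerProductSpace ℝ E]
    (Y : Set E) : ℝ := (circumData Y).2

/-! The circumcenter is an affine combination `c = ∑ wᵢ yᵢ` with `∑ wᵢ = 1`. Since the `yᵢ` are
unit vectors, `‖c - yᵢ‖ = ρ` makes `⟪yᵢ, c⟫` independent of `i`; pairing `c` with itself then shows
this common value is `‖c‖² = 1 - ρ²`, which is positive because `0` is not in the affine span of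
linearly independent vectors. Hence `G w = (1 - ρ²) 𝟙`, and summing the entries of
`w = (1 - ρ²) G⁻¹ 𝟙` gives `1 = (1 - ρ²) ∑ᵢⱼ (G⁻¹)ᵢⱼ`. -/

open Matrix EuclideanGeometry

theorem exists_sum_smul_eq_of_mem_affineSpan {k V ι : Type*} [Ring k] [AddCommGroup V]
    [Module k V] [Fintype ι] {v : ι → V} {p : V} (hp : p ∈ affineSpan k (Set.range v)) :
    ∃ w : ι → k, ∑ i, w i = 1 ∧ ∑ i, w i • v i = p := by
  obtain ⟨w, hw1, rfl⟩ := eq_affineCombination_of_mem_affineSpan_of_fintype hp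
  exact ⟨w, hw1, (Finset.univ.affineCombination_eq_linear_combination v w hw1).symm⟩

theorem LinearIndependent.zero_notMem_affineSpan {k V ι : Type*} [Ring k] [Nontrivial k]
    [AddCommGroup V] [Module k V] {v : ι → V} (hv : LinearIndependent k v) :
    (0 : V) ∉ affineSpan k (Set.range v) := by
  intro h0
  obtain ⟨s, w, hw1, hw0⟩ := eq_affineCombination_of_mem_affineSpan h0
  rw [s.affineCombination_eq_linear_combination v w hw1] at hw0
  have hw : ∀ i ∈ s, w i = 0 := linearIndependent_iff'.1 hv s w hw0.symm
  rw [Finset.sum_eq_zero hw] at hw1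
  exact zero_ne_one hw1

theorem Matrix.sum_eq_mul_sum_inv_of_mulVec_eq_const {n R : Type*} [Fintype n] [DecidableEq n]
    [CommRing R] {A : Matrix n n R} (hA : IsUnit A.det) {w : n → R} {a : R}
    (h : A *ᵥ w = fun _ => a) : ∑ i, w i = a * ∑ i, ∑ j, A⁻¹ i j := by
  have hw : w = A⁻¹ *ᵥ fun _ => a := by
    rw [← h, mulVec_mulVec, nonsing_inv_mul _ hA, one_mulVec]
  rw [hw, mul_comm, Finset.sum_mul]
  simp only [mulVec, dotProduct, Finset.sum_mul]

theorem Matrix.gram_mulVec {𝕜 E n : Type*} [RCLike 𝕜] [NormedAddCommGroup E]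
    [InnerProductSpace 𝕜 E] [Fintype n] (v : n → E) (w : n → 𝕜) :
    gram 𝕜 v *ᵥ w = fun i => inner 𝕜 (v i) (∑ j, w j • v j) := by
  ext i
  simp only [mulVec, dotProduct, gram_apply, inner_sum, inner_smul_right, mul_comm]

section

variable {E : Type*} [NormedAddCommGroup E] [InnerProductSpace ℝ E]

theorem isCircum_iff_subset_sphere {Y : Set E} {c : E} {ρ : ℝ} :
    IsCircum Y c ρ ↔ c ∈ affineSpan ℝ Y ∧ Y ⊆ (⟨c, ρ⟩ : Sphere E) := by
  simp only [IsCircum, Set.subset_def, Metric.mem_sphere, dist_comm]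

theorem isCircum_circumData {Y : Set E} (h : ∃ p : E × ℝ, IsCircum Y p.1 p.2 ∧ 0 ≤ p.2) :
    IsCircum Y (circumData Y).1 (circumradius Y) ∧ 0 ≤ circumradius Y := by
  rw [circumradius, circumData, dif_pos h]
  exact h.choose_spec

theorem AffineIndependent.existsUnique_isCircum {ι : Type*} [Nonempty ι] [Finite ι] {y : ι → E}
    (hy : AffineIndependent ℝ y) :
    ∃! p : E × ℝ, IsCircum (Set.range y) p.1 p.2 ∧ 0 ≤ p.2 := by
  obtain ⟨cs, hcs, huniq⟩ := hy.existsUnique_dist_eq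
  have hρ : 0 ≤ cs.radius := Sphere.radius_nonneg_of_mem (hcs.2 ⟨Classical.arbitrary ι, rfl⟩)
  refine ⟨(cs.center, cs.radius), ⟨isCircum_iff_subset_sphere.2 hcs, hρ⟩, ?_⟩
  rintro ⟨c, ρ⟩ ⟨h, -⟩
  rw [← huniq ⟨c, ρ⟩ (isCircum_iff_subset_sphere.1 h)]

theorem inner_eq_of_norm_eq_one_of_dist_eq {c y : E} {ρ : ℝ} (hy : ‖y‖ = 1)
    (h : dist c y = ρ) : inner ℝ c y = (‖c‖ ^ 2 + 1 - ρ ^ 2) / 2 := by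
  have := norm_sub_sq_real c y
  rw [← dist_eq_norm, h, hy] at this
  linarith

variable {ι : Type*} [Fintype ι] {y : ι → E} {c : E} {ρ : ℝ}

theorem norm_sq_eq_one_sub_sq_of_isCircum (hunit : ∀ i, ‖y i‖ = 1)
    (hc : IsCircum (Set.range y) c ρ) : ‖c‖ ^ 2 = 1 - ρ ^ 2 := by
  obtain ⟨w, hw1, hcw⟩ := exists_sum_smul_eq_of_mem_affineSpan hc.1
  have hinner i := inner_eq_of_norm_eq_one_of_dist_eq (hunit i) (hc.2 _ ⟨i, rfl⟩)
  have : ‖c‖ ^ 2 = (‖c‖ ^ 2 + 1 - ρ ^ 2) / 2 := calc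
    ‖c‖ ^ 2 = inner ℝ c (∑ i, w i • y i) := by rw [hcw, real_inner_self_eq_norm_sq]
    _ = ∑ i, w i * ((‖c‖ ^ 2 + 1 - ρ ^ 2) / 2) := by
      simp only [inner_sum, real_inner_smul_right, hinner]
    _ = (‖c‖ ^ 2 + 1 - ρ ^ 2) / 2 := by rw [← Finset.sum_mul, hw1, one_mul]
  linarith

theorem inner_eq_one_sub_sq_of_isCircum (hunit : ∀ i, ‖y i‖ = 1)
    (hc : IsCircum (Set.range y) c ρ) (i : ι) : inner ℝ (y i) c = 1 - ρ ^ 2 := by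
  rw [real_inner_comm, inner_eq_of_norm_eq_one_of_dist_eq (hunit i) (hc.2 _ ⟨i, rfl⟩),
    norm_sq_eq_one_sub_sq_of_isCircum hunit hc]
  ring

end

/-- If `y₁,…,y_k` are linearly independent unit vectors in `ℝ^k` and `G` is their Gram
matrix, then the points `y₁,…,y_k` are affinely independent, they have a unique
circumsphere, the circumradius `ρ` satisfies `ρ < 1`, and the sum of the entries of
`G⁻¹` equals `1/(1−ρ²)`. -/
theorem gram_inv_sum_eq_one_div_one_sub_circumradius_sq
    (k : ℕ) (hk : 0 < k) (y : Fin k → EuclideanSpace ℝ (Fin k))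
    (hunit : ∀ i, ‖y i‖ = 1) (hli : LinearIndependent ℝ y) :
    AffineIndependent ℝ y ∧
    (∃! p : (EuclideanSpace ℝ (Fin k)) × ℝ, IsCircum (Set.range y) p.1 p.2 ∧ 0 ≤ p.2) ∧
    circumradius (Set.range y) < 1 ∧
    ∑ i, ∑ j, (Matrix.of fun i j : Fin k => (inner ℝ (y i) (y j) : ℝ))⁻¹ i j
      = 1 / (1 - circumradius (Set.range y) ^ 2) := by
  have : Nonempty (Fin k) := ⟨⟨0, hk⟩⟩
  have hEU := hli.affineIndependent.existsUnique_isCircum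
  obtain ⟨hcirc, hρ0⟩ := isCircum_circumData hEU.exists
  set c := (circumData (Set.range y)).1
  set ρ := circumradius (Set.range y)
  obtain ⟨w, hw1, hcw⟩ := exists_sum_smul_eq_of_mem_affineSpan hcirc.1
  have hc0 : c ≠ 0 := fun h => hli.zero_notMem_affineSpan (h ▸ hcirc.1)
  have hpos : 0 < 1 - ρ ^ 2 := by
    rw [← norm_sq_eq_one_sub_sq_of_isCircum hunit hcirc]
    exact pow_pos (norm_pos_iff.2 hc0) 2
  refine ⟨hli.affineIndependent, hEU, by nlinarith, ?_⟩
  have hG : gram ℝ y *ᵥ w = fun _ => 1 - ρ ^ 2 := by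
    rw [gram_mulVec, hcw]
    exact funext (inner_eq_one_sub_sq_of_isCircum hunit hcirc)
  have hdet : IsUnit (gram ℝ y).det := (posDef_gram_of_linearIndependent hli).det_pos.ne'.isUnit
  have hsum := sum_eq_mul_sum_inv_of_mulVec_eq_const hdet hG
  rw [hw1] at hsum
  exact eq_one_div_of_mul_eq_one_right hsum.symm
end
end

section
/- Let X = {x₁,…,x_k} be a finite positive definite metric space. Then there exist vectors y₁,…,y_k ∈ ℝ^k with yᵢ·yⱼ = exp(−d(xᵢ,xⱼ)) for all i,j; moreover, for any such vectors, the set Y = {y₁,…,y_k} is a similarity embedding (in particular ρ_Y < 1), and the magnitude satisfies |X| = 1/(1−ρ_Y²). -/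
open Metric

noncomputable section

/-- The tri-similarity inequality for a triple of points of a Euclidean space. -/
def TriSim {E : Type*} [NormedAddCommGroup E] [InnerProductSpace ℝ E] (a b c : E) : Prop :=
  ‖a - c‖ ^ 2 + (1 / 2) * (‖a - b‖ ^ 2 * ‖b - c‖ ^ 2) ≤ ‖a - b‖ ^ 2 + ‖b - c‖ ^ 2

/-- A similarity embedding: a finite affinely independent subset `Y` of a Euclidean space
with `‖y − y'‖² < 2` for all `y, y' ∈ Y`, circumradius `< 1`, and all triples satisfying
the tri-similarity inequality. -/
def IsSimEmb {E : Type*} [NormedAddCommGroup E] [InnerProductSpace ℝ E] (Y : Set E) : Prop :=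
  Y.Finite ∧ AffineIndependent ℝ ((↑) : Y → E) ∧
    (∀ y ∈ Y, ∀ y' ∈ Y, ‖y - y'‖ ^ 2 < 2) ∧
    circumradius Y < 1 ∧
    ∀ a ∈ Y, ∀ b ∈ Y, ∀ c ∈ Y, TriSim a b c

/-! Positive definiteness makes `ζ_X` the Gram matrix of linearly independent unit vectors `yᵢ`
with positive inner products, and for unit vectors the tri-similarity inequality for `(a, b, c)`
is just `⟪a, b⟫ ⟪b, c⟫ ≤ ⟪a, c⟫`, i.e. the triangle inequality for `d` after exponentiating.
With `w = 1ᵀ ζ_X⁻¹` and `μ = ∑ wᵢ = |X|`, the vector `u = ∑ wᵢ yᵢ` satisfies `⟪u, yⱼ⟫ = 1` for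
every `j` and `‖u‖² = μ`, so `u / μ` lies in the affine span of `Y` at squared distance
`1 − 1/μ` from every `yⱼ`. Hence `ρ_Y² = 1 − 1/|X|`. -/

open Matrix InnerProductSpace
open scoped ComplexOrder

theorem Matrix.PosSemidef.exists_gram_eq {𝕜 ι : Type*} [RCLike 𝕜] [Fintype ι]
    {A : Matrix ι ι 𝕜} (hA : A.PosSemidef) :
    ∃ v : ι → EuclideanSpace 𝕜 ι, gram 𝕜 v = A := by
  classical
  open scoped MatrixOrder in
  obtain ⟨B, hBB, hB⟩ : ∃ B : Matrix ι ι 𝕜, B * B = A ∧ B.IsHermitian :=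
    ⟨CFC.sqrt A, CFC.sqrt_mul_sqrt_self A hA.nonneg, (CFC.sqrt_nonneg A).posSemidef.isHermitian⟩
  refine ⟨fun j => WithLp.toLp 2 fun i => B i j, ?_⟩
  rw [gram_eq_conjTranspose_mul (EuclideanSpace.basisFun ι 𝕜), ← hBB]
  nth_rw 3 [← hB.eq]
  rfl

theorem IsCircum.radius_eq {E : Type*} [NormedAddCommGroup E] [InnerProductSpace ℝ E]
    {Y : Set E} (hY : Y.Nonempty) {c₁ c₂ : E} {ρ₁ ρ₂ : ℝ}
    (h₁ : IsCircum Y c₁ ρ₁) (h₂ : IsCircum Y c₂ ρ₂) : ρ₁ = ρ₂ := by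
  have hspan : c₂ -ᵥ c₁ ∈ vectorSpan ℝ Y := by
    rw [← direction_affineSpan]
    exact AffineSubspace.vsub_mem_direction h₂.1 h₁.1
  have hperp : vectorSpan ℝ Y ≤ (ℝ ∙ (c₂ -ᵥ c₁))ᗮ := by
    refine Submodule.span_le.2 ?_
    rintro _ ⟨a, ha, b, hb, rfl⟩
    rw [SetLike.mem_coe, Submodule.mem_orthogonal_singleton_iff_inner_right]
    refine EuclideanGeometry.inner_vsub_vsub_of_dist_eq_of_dist_eq ?_ ?_ <;>
      simp only [dist_comm _ c₁, dist_comm _ c₂, h₁.2 _ ha, h₁.2 _ hb, h₂.2 _ ha, h₂.2 _ hb]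
  have hc : c₁ = c₂ := by
    have := Submodule.mem_orthogonal_singleton_iff_inner_right.1 (hperp hspan)
    rw [inner_self_eq_zero, vsub_eq_sub, sub_eq_zero] at this
    exact this.symm
  obtain ⟨y, hy⟩ := hY
  rw [← h₁.2 y hy, ← h₂.2 y hy, hc]

theorem circumradius_eq_of_isCircum {E : Type*} [NormedAddCommGroup E] [InnerProductSpace ℝ E]
    {Y : Set E} (hY : Y.Nonempty) {c : E} {ρ : ℝ} (h : IsCircum Y c ρ) (hρ : 0 ≤ ρ) :
    circumradius Y = ρ := by
  have hex : ∃ p : E × ℝ, IsCircum Y p.1 p.2 ∧ 0 ≤ p.2 := ⟨(c, ρ), h, hρ⟩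
  rw [circumradius, circumData, dif_pos hex]
  exact hex.choose_spec.1.radius_eq hY h

section UnitVectors

variable {E ι : Type*} [NormedAddCommGroup E] [InnerProductSpace ℝ E]

theorem norm_sub_sq_eq_two_sub_two_inner {a b : E} (ha : ‖a‖ = 1) (hb : ‖b‖ = 1) :
    ‖a - b‖ ^ 2 = 2 - 2 * ⟪a, b⟫_ℝ := by
  rw [norm_sub_sq_real, ha, hb]
  ring

theorem triSim_iff_of_norm_eq_one {a b c : E} (ha : ‖a‖ = 1) (hb : ‖b‖ = 1) (hc : ‖c‖ = 1) :
    TriSim a b c ↔ ⟪a, b⟫_ℝ * ⟪b, c⟫_ℝ ≤ ⟪a, c⟫_ℝ := by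
  rw [TriSim, norm_sub_sq_eq_two_sub_two_inner ha hb, norm_sub_sq_eq_two_sub_two_inner hb hc,
    norm_sub_sq_eq_two_sub_two_inner ha hc]
  constructor <;> intro h <;> nlinarith

variable [Fintype ι] {v : ι → E} {w : ι → ℝ}

theorem norm_sum_smul_sq_eq_sum (hw : ∀ j, ⟪∑ i, w i • v i, v j⟫_ℝ = 1) :
    ‖∑ i, w i • v i‖ ^ 2 = ∑ i, w i := by
  rw [← real_inner_self_eq_norm_sq]
  conv_lhs => rw [inner_sum]
  simp only [real_inner_smul_right, hw, mul_one]

theorem sum_pos_of_inner_sum_smul_eq_one [Nonempty ι] (hw : ∀ j, ⟪∑ i, w i • v i, v j⟫_ℝ = 1) :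
    0 < ∑ i, w i := by
  have hne : ∑ i, w i • v i ≠ 0 := by
    intro h
    simpa [h] using hw (Classical.arbitrary ι)
  rw [← norm_sum_smul_sq_eq_sum hw]
  positivity

theorem dist_inv_sum_smul_sq (hv : ∀ i, ‖v i‖ = 1) (hw : ∀ j, ⟪∑ i, w i • v i, v j⟫_ℝ = 1)
    (j : ι) : dist ((∑ i, w i)⁻¹ • ∑ i, w i • v i) (v j) ^ 2 = 1 - (∑ i, w i)⁻¹ := by
  rw [dist_eq_norm, norm_sub_sq_real, norm_smul, mul_pow, norm_sum_smul_sq_eq_sum hw,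
    real_inner_smul_left, hw, hv, Real.norm_eq_abs, sq_abs]
  by_cases hμ : ∑ i, w i = 0
  · simp [hμ]
  · field_simp
    ring

theorem inv_sum_smul_mem_affineSpan (hμ : ∑ i, w i ≠ 0) :
    (∑ i, w i)⁻¹ • ∑ i, w i • v i ∈ affineSpan ℝ (Set.range v) := by
  have hsum : ∑ i, (∑ i, w i)⁻¹ * w i = 1 := by rw [← Finset.mul_sum, inv_mul_cancel₀ hμ]
  have := affineCombination_mem_affineSpan hsum v
  rw [Finset.univ.affineCombination_eq_linear_combination v _ hsum] at this
  simpa only [Finset.smul_sum, smul_smul] using this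

theorem circumradius_range_sq_eq [Nonempty ι] (hv : ∀ i, ‖v i‖ = 1)
    (hw : ∀ j, ⟪∑ i, w i • v i, v j⟫_ℝ = 1) :
    circumradius (Set.range v) ^ 2 = 1 - (∑ i, w i)⁻¹ := by
  set c := (∑ i, w i)⁻¹ • ∑ i, w i • v i
  obtain ⟨j⟩ := ‹Nonempty ι›
  have hc : IsCircum (Set.range v) c (dist c (v j)) := by
    refine ⟨inv_sum_smul_mem_affineSpan (sum_pos_of_inner_sum_smul_eq_one hw).ne', ?_⟩
    rintro _ ⟨i, rfl⟩
    rw [← sq_eq_sq₀ dist_nonneg dist_nonneg, dist_inv_sum_smul_sq hv hw,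
      dist_inv_sum_smul_sq hv hw]
  rw [circumradius_eq_of_isCircum (Set.range_nonempty v) hc dist_nonneg,
    dist_inv_sum_smul_sq hv hw]

theorem inner_sum_smul_eq_vecMul_gram (j : ι) :
    ⟪∑ i, w i • v i, v j⟫_ℝ = (w ᵥ* gram ℝ v) j := by
  simp only [sum_inner, real_inner_smul_left, vecMul, dotProduct, gram_apply]

theorem inner_sum_vecMul_inv_gram_smul [DecidableEq ι] (hG : (gram ℝ v).PosDef) (j : ι) :
    ⟪∑ i, (1 ᵥ* (gram ℝ v)⁻¹) i • v i, v j⟫_ℝ = 1 := by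
  rw [inner_sum_smul_eq_vecMul_gram, vecMul_vecMul,
    nonsing_inv_mul _ ((isUnit_iff_isUnit_det _).1 hG.isUnit), vecMul_one, Pi.one_apply]

theorem circumradius_range_sq_eq_one_sub_inv [DecidableEq ι] [Nonempty ι]
    (hG : (gram ℝ v).PosDef) (hv : ∀ i, ‖v i‖ = 1) :
    circumradius (Set.range v) ^ 2 = 1 - (∑ i, ∑ j, (gram ℝ v)⁻¹ i j)⁻¹ := by
  rw [circumradius_range_sq_eq hv (inner_sum_vecMul_inv_gram_smul hG)]
  simp only [vecMul, dotProduct, Pi.one_apply, one_mul]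
  rw [Finset.sum_comm]

theorem isSimEmb_range_of_posDef_gram [Nonempty ι] (hG : (gram ℝ v).PosDef) (hv : ∀ i, ‖v i‖ = 1)
    (hpos : ∀ i j, 0 < ⟪v i, v j⟫_ℝ)
    (hmul : ∀ i j l, ⟪v i, v j⟫_ℝ * ⟪v j, v l⟫_ℝ ≤ ⟪v i, v l⟫_ℝ) :
    IsSimEmb (Set.range v) := by
  classical
  refine ⟨Set.finite_range v, (linearIndependent_of_posDef_gram hG).affineIndependent.range,
    ?_, ?_, ?_⟩
  · rintro _ ⟨i, rfl⟩ _ ⟨j, rfl⟩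
    rw [norm_sub_sq_eq_two_sub_two_inner (hv i) (hv j)]
    linarith [hpos i j]
  · have hρ := circumradius_range_sq_eq hv (inner_sum_vecMul_inv_gram_smul hG)
    have hμ := sum_pos_of_inner_sum_smul_eq_one (inner_sum_vecMul_inv_gram_smul hG)
    have hsq : circumradius (Set.range v) ^ 2 < 1 := by
      rw [hρ]
      linarith [inv_pos.2 hμ]
    exact (le_abs_self _).trans_lt ((sq_lt_one_iff_abs_lt_one _).1 hsq)
  · rintro _ ⟨i, rfl⟩ _ ⟨j, rfl⟩ _ ⟨l, rfl⟩
    exact (triSim_iff_of_norm_eq_one (hv i) (hv j) (hv l)).2 (hmul i j l)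

end UnitVectors

section Zeta

variable {α : Type*} [Fintype α] (M : MetricSpace α)

theorem zetaM_apply_self (x : α) : zetaM M x x = 1 := by
  simp [zetaM]

theorem zetaM_pos (x y : α) : 0 < zetaM M x y :=
  Real.exp_pos _

theorem zetaM_mul_zetaM_le (x y z : α) : zetaM M x y * zetaM M y z ≤ zetaM M x z := by
  simp only [zetaM, of_apply, ← Real.exp_add, Real.exp_le_exp]
  linarith [@dist_triangle _ M.toPseudoMetricSpace x y z]

theorem magnitudeM_eq_sum_inv [DecidableEq α] : magnitudeM M = ∑ x, ∑ y, (zetaM M)⁻¹ x y := by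
  unfold magnitudeM
  congr!

end Zeta

/-- For a finite positive definite metric space `X = {x₁,…,x_k}`, there exist vectors
`y₁,…,y_k ∈ ℝ^k` with `yᵢ·yⱼ = exp(−d(xᵢ,xⱼ))`; moreover any such vectors form a
similarity embedding `Y`, and `|X| = 1/(1−ρ_Y²)`. -/
theorem exists_similarity_embedding_and_magnitude_eq
    (k : ℕ) (hk : 0 < k) (MX : MetricSpace (Fin k)) (hpd : (zetaM MX).PosDef) :
    (∃ y : Fin k → EuclideanSpace ℝ (Fin k),
      ∀ i j, (inner ℝ (y i) (y j) : ℝ)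
        = Real.exp (-(MX.toPseudoMetricSpace.toDist.dist i j))) ∧
    ∀ y : Fin k → EuclideanSpace ℝ (Fin k),
      (∀ i j, (inner ℝ (y i) (y j) : ℝ)
        = Real.exp (-(MX.toPseudoMetricSpace.toDist.dist i j))) →
      IsSimEmb (Set.range y) ∧
        magnitudeM MX = 1 / (1 - circumradius (Set.range y) ^ 2) := by
  refine ⟨?_, fun y hy => ?_⟩
  · obtain ⟨y, hy⟩ := hpd.posSemidef.exists_gram_eq
    exact ⟨y, fun i j => congrFun₂ hy i j⟩
  have hG : gram ℝ y = zetaM MX := Matrix.ext hy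
  have : Nonempty (Fin k) := ⟨⟨0, hk⟩⟩
  have hv : ∀ i, ‖y i‖ = 1 := fun i => by
    rw [norm_eq_sqrt_real_inner, ← gram_apply, hG, zetaM_apply_self, Real.sqrt_one]
  rw [← hG] at hpd
  refine ⟨isSimEmb_range_of_posDef_gram hpd hv (fun i j => by rw [hy]; exact zetaM_pos MX i j)
    (fun i j l => by rw [hy, hy, hy]; exact zetaM_mul_zetaM_le MX i j l), ?_⟩
  rw [circumradius_range_sq_eq_one_sub_inv hpd hv, hG, magnitudeM_eq_sum_inv, sub_sub_cancel,
    one_div, inv_inv]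
end
end

section
/- Let Y = {y₁,…,y_k} be a similarity embedding in ℝ^d (with y₁,…,y_k pairwise distinct). Then d'(i,j) := −log(1 − (1/2)∥yᵢ−yⱼ∥²) for i ≠ j, together with d'(i,i) = 0, defines a metric on {1,…,k}; the resulting finite metric space X' is positive definite (its zeta matrix (exp(−d'(i,j)))_{i,j} is positive definite); and its magnitude satisfies |X'| = 1/(1−ρ_Y²). -/
open Metric

noncomputable section

/-! The key identity is `1 - ½‖yᵢ - yⱼ‖² = (1 - ρ²) + ⟪yᵢ - c, yⱼ - c⟫` for the circumcenter `c`: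
the zeta matrix of `X'` is a positive constant matrix plus the Gram matrix of the centred points.
Its quadratic form is `(1 - ρ²)(∑ xᵢ)² + ‖∑ xᵢ (yᵢ - c)‖²`, positive by affine independence, and the
barycentric coordinates `w` of `c` satisfy `ζ w = (1 - ρ²) 𝟙`, whence `|X'| = ∑ wᵢ / (1 - ρ²)`.
The tri-similarity inequality is the multiplicative triangle inequality for `1 - ½‖a - b‖²`. -/

open Matrix InnerProductSpace

lemma magnitudeM_eq {α : Type*} [Fintype α] [DecidableEq α] (M : MetricSpace α) :
    magnitudeM M = ∑ x, ∑ y, (zetaM M)⁻¹ x y := by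
  unfold magnitudeM
  congr!

abbrev MetricSpace.ofNegLog {ι : Type*} (s : ι → ι → ℝ) (pos : ∀ i j, 0 < s i j)
    (self : ∀ i, s i i = 1) (comm : ∀ i j, s i j = s j i)
    (mul_le : ∀ i j l, s i j * s j l ≤ s i l) (eq_of_eq_one : ∀ i j, s i j = 1 → i = j) :
    MetricSpace ι where
  dist i j := -Real.log (s i j)
  dist_self i := by simp [self]
  dist_comm i j := by rw [comm]
  dist_triangle i j l := by
    have := Real.log_le_log (mul_pos (pos i j) (pos j l)) (mul_le i j l)
    rw [Real.log_mul (pos i j).ne' (pos j l).ne'] at this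
    linarith
  eq_of_dist_eq_zero {i j} h := by
    refine eq_of_eq_one i j (Real.eq_one_of_pos_of_log_eq_zero (pos i j) ?_)
    simpa using h

lemma zetaM_ofNegLog {ι : Type*} [Fintype ι] (s : ι → ι → ℝ) (pos : ∀ i j, 0 < s i j)
    (self : ∀ i, s i i = 1) (comm : ∀ i j, s i j = s j i)
    (mul_le : ∀ i j l, s i j * s j l ≤ s i l) (eq_of_eq_one : ∀ i j, s i j = 1 → i = j) :
    zetaM (MetricSpace.ofNegLog s pos self comm mul_le eq_of_eq_one) = Matrix.of s := by
  ext i j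
  exact (congrArg Real.exp (neg_neg _)).trans (Real.exp_log (pos i j))

section Euclidean

variable {E : Type*} [NormedAddCommGroup E] [InnerProductSpace ℝ E]

lemma triSim_iff_mul_le (a b c : E) :
    TriSim a b c ↔
      (1 - 1 / 2 * ‖a - b‖ ^ 2) * (1 - 1 / 2 * ‖b - c‖ ^ 2) ≤ 1 - 1 / 2 * ‖a - c‖ ^ 2 := by
  unfold TriSim
  constructor <;> intro h <;> linarith

lemma one_sub_half_norm_sub_sq_eq {a b c : E} {ρ : ℝ} (ha : ‖a - c‖ = ρ) (hb : ‖b - c‖ = ρ) :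
    1 - 1 / 2 * ‖a - b‖ ^ 2 = (1 - ρ ^ 2) + ⟪a - c, b - c⟫_ℝ := by
  rw [← sub_sub_sub_cancel_right a b c, norm_sub_sq_real, ha, hb]
  ring

lemma circumradius_range_points {n : ℕ} (s : Affine.Simplex ℝ E n) :
    circumradius (Set.range s.points) = s.circumradius := by
  have hex : ∃ p : E × ℝ, IsCircum (Set.range s.points) p.1 p.2 ∧ 0 ≤ p.2 := by
    refine ⟨(s.circumcenter, s.circumradius), ⟨s.circumcenter_mem_affineSpan, ?_⟩,
      s.circumradius_nonneg⟩
    rintro _ ⟨i, rfl⟩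
    rw [dist_comm]
    exact s.dist_circumcenter_eq_circumradius i
  obtain ⟨⟨hmem, hdist⟩, -⟩ := hex.choose_spec
  rw [circumradius, circumData, dif_pos hex]
  exact s.eq_circumradius_of_dist_eq hmem fun i => by rw [dist_comm]; exact hdist _ ⟨i, rfl⟩

lemma Affine.Simplex.of_one_sub_half_norm_sub_sq_eq_const_add_gram {n : ℕ}
    (s : Affine.Simplex ℝ E n) :
    Matrix.of (fun i j => 1 - 1 / 2 * ‖s.points i - s.points j‖ ^ 2) =
      Matrix.of (fun _ _ => 1 - s.circumradius ^ 2) +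
        gram ℝ (fun i => s.points i - s.circumcenter) := by
  ext i j
  rw [Matrix.add_apply, gram_apply, Matrix.of_apply, Matrix.of_apply]
  rw [one_sub_half_norm_sub_sq_eq] <;>
    (rw [← dist_eq_norm]; exact s.dist_circumcenter_eq_circumradius _)

lemma exists_sum_smul_sub_eq_zero_of_mem_affineSpan {ι : Type*} [Fintype ι] {y : ι → E} {c : E}
    (hc : c ∈ affineSpan ℝ (Set.range y)) :
    ∃ w : ι → ℝ, ∑ i, w i = 1 ∧ ∑ i, w i • (y i - c) = 0 := by
  obtain ⟨w, hw1, hwc⟩ := eq_affineCombination_of_mem_affineSpan_of_fintype hc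
  refine ⟨w, hw1, ?_⟩
  rw [Finset.affineCombination_eq_linear_combination _ _ _ hw1] at hwc
  simp_rw [smul_sub, Finset.sum_sub_distrib, ← Finset.sum_smul, hw1, one_smul, ← hwc, sub_self]

variable {ι : Type*} [Fintype ι]

lemma star_dotProduct_const_add_gram_mulVec (a : ℝ) (v : ι → E) (x : ι → ℝ) :
    star x ⬝ᵥ (Matrix.of (fun _ _ => a) + gram ℝ v) *ᵥ x =
      a * (∑ i, x i) ^ 2 + ‖∑ i, x i • v i‖ ^ 2 := by
  rw [add_mulVec, dotProduct_add, star_dotProduct_gram_mulVec, real_inner_self_eq_norm_sq]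
  simp only [dotProduct, mulVec, Matrix.of_apply, star_trivial, ← Finset.mul_sum, ← Finset.sum_mul]
  ring

lemma posDef_const_add_gram {a : ℝ} (ha : 0 < a) {v : ι → E} (hv : AffineIndependent ℝ v) :
    (Matrix.of (fun _ _ => a) + gram ℝ v).PosDef := by
  refine PosDef.of_dotProduct_mulVec_pos ?_ fun x hx => ?_
  · exact (IsHermitian.ext fun _ _ => star_trivial a).add (isHermitian_gram ℝ v)
  rw [star_dotProduct_const_add_gram_mulVec]
  rcases eq_or_ne (∑ i, x i) 0 with hsum | hsum
  · have hcomb : ∑ i, x i • v i ≠ 0 := fun hzero => hx <| funext <|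
      (affineIndependent_iff_of_fintype ℝ v).1 hv x hsum <| by
        rwa [Finset.weightedVSub_eq_linear_combination _ hsum]
    rw [hsum]
    positivity
  · positivity

lemma const_add_gram_mulVec_eq_const (a : ℝ) {v : ι → E} {w : ι → ℝ} (hw1 : ∑ i, w i = 1)
    (hw0 : ∑ i, w i • v i = 0) :
    (Matrix.of (fun _ _ => a) + gram ℝ v) *ᵥ w = fun _ => a := by
  ext i
  have : ∑ j, ⟪v i, v j⟫_ℝ * w j = ⟪v i, ∑ j, w j • v j⟫_ℝ := by
    simp only [inner_sum, real_inner_smul_right, mul_comm]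
  rw [add_mulVec, Pi.add_apply]
  simp only [mulVec, dotProduct, Matrix.of_apply, gram_apply]
  rw [← Finset.mul_sum, hw1, this, hw0, inner_zero_right, mul_one, add_zero]

end Euclidean

lemma Matrix.sum_inv_apply_eq_of_mulVec_eq_const {ι : Type*} [Fintype ι] [DecidableEq ι]
    {A : Matrix ι ι ℝ} (hA : IsUnit A.det) {w : ι → ℝ} {a : ℝ} (ha : a ≠ 0)
    (hw : A *ᵥ w = fun _ => a) :
    ∑ i, ∑ j, A⁻¹ i j = (∑ i, w i) / a := by
  have hinv : A⁻¹ *ᵥ (fun _ => a) = w := by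
    rw [← hw, mulVec_mulVec, nonsing_inv_mul _ hA, one_mulVec]
  rw [eq_div_iff ha, ← hinv, Finset.sum_mul]
  simp only [mulVec, dotProduct, Finset.sum_mul]

/-- If `Y = {y₁,…,y_k}` is a similarity embedding in `ℝ^d` with pairwise distinct points,
then `d'(i,j) = −log(1 − ½‖yᵢ−yⱼ‖²)` defines a metric on `{1,…,k}`, the resulting finite
metric space is positive definite, and its magnitude equals `1/(1−ρ_Y²)`. -/
theorem similarity_embedding_metric_posDef_magnitude
    (k d : ℕ) (hk : 0 < k) (y : Fin k → EuclideanSpace ℝ (Fin d))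
    (hinj : Function.Injective y) (hY : IsSimEmb (Set.range y)) :
    ∃ M : MetricSpace (Fin k),
      (∀ i j, M.toPseudoMetricSpace.toDist.dist i j
        = -Real.log (1 - (1 / 2) * ‖y i - y j‖ ^ 2)) ∧
      (zetaM M).PosDef ∧
      magnitudeM M = 1 / (1 - circumradius (Set.range y) ^ 2) := by
  obtain ⟨n, rfl⟩ := Nat.exists_eq_succ_of_ne_zero hk.ne'
  obtain ⟨-, hindep, hlt, hρ, htri⟩ := hY
  let s : Affine.Simplex ℝ (EuclideanSpace ℝ (Fin d)) n := ⟨y, hindep.of_set_of_injective hinj⟩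
  rw [show Set.range y = Set.range s.points from rfl, circumradius_range_points] at hρ ⊢
  have ha : 0 < 1 - s.circumradius ^ 2 := by nlinarith [s.circumradius_nonneg]
  let M := MetricSpace.ofNegLog (fun i j => 1 - 1 / 2 * ‖y i - y j‖ ^ 2)
    (fun i j => by linarith [hlt _ ⟨i, rfl⟩ _ ⟨j, rfl⟩]) (fun i => by simp)
    (fun i j => by rw [norm_sub_rev])
    (fun i j l => (triSim_iff_mul_le _ _ _).1 (htri _ ⟨i, rfl⟩ _ ⟨j, rfl⟩ _ ⟨l, rfl⟩))
    (fun i j h => hinj <| sub_eq_zero.1 <| by simpa using h)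
  have hζ : zetaM M =
      Matrix.of (fun _ _ => 1 - s.circumradius ^ 2) + gram ℝ (fun i => y i - s.circumcenter) :=
    (zetaM_ofNegLog ..).trans s.of_one_sub_half_norm_sub_sq_eq_const_add_gram
  have hcentred : AffineIndependent ℝ (fun i => y i - s.circumcenter) := by
    convert s.independent.vadd (v := -s.circumcenter) using 1
    exact funext fun i => (neg_add_eq_sub _ _).symm
  have hpd : (zetaM M).PosDef := hζ ▸ posDef_const_add_gram ha hcentred
  obtain ⟨w, hw1, hw0⟩ :=
    exists_sum_smul_sub_eq_zero_of_mem_affineSpan s.circumcenter_mem_affineSpan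
  refine ⟨M, fun _ _ => rfl, hpd, ?_⟩
  rw [magnitudeM_eq, Matrix.sum_inv_apply_eq_of_mulVec_eq_const
    (isUnit_iff_ne_zero.2 hpd.det_pos.ne') ha.ne'
    (hζ ▸ const_add_gram_mulVec_eq_const _ hw1 hw0), hw1]
end
end

section
/- Let y₁,…,y_k ∈ ℝ^k and let G = (yᵢ·yⱼ)_{1≤i,j≤k} be their Gram matrix. Then the cofactor sum Σ_{i,j=1}^{k} (−1)^{i+j} det(G^{(i,j)}), where G^{(i,j)} denotes G with its i-th row and j-th column removed, equals the determinant of the (k−1)×(k−1) Gram matrix of the difference vectors y₂−y₁, y₃−y₁, …, y_k−y₁. -/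
/-!
The cofactor sum is the sum `𝟙ᵀ (adj G) 𝟙` of all entries of the adjugate. Let `P` be the
unimodular matrix subtracting row `0` from every other row. Since `det P = 1`,
`adj G = Pᵀ adj (P G Pᵀ) P`, and `P 𝟙 = e₀`, so the sum is the `(0, 0)` cofactor of `P G Pᵀ`,
whose entries off row and column `0` are `⟪yᵢ - y₀, yⱼ - y₀⟫`.
-/

namespace Matrix

variable {ι R : Type*} [Fintype ι] [CommRing R]

theorem sum_transpose_mul_mul_apply (A N : Matrix ι ι R) :
    ∑ i, ∑ j, (Aᵀ * N * A) i j = (A *ᵥ 1) ⬝ᵥ (N *ᵥ (A *ᵥ 1)) := by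
  have hsum : ∑ i, ∑ j, (Aᵀ * N * A) i j = 1 ⬝ᵥ ((Aᵀ * N * A) *ᵥ 1) := by
    simp [dotProduct, mulVec]
  rw [hsum, ← mulVec_mulVec, ← mulVec_mulVec, dotProduct_mulVec, vecMul_transpose]

variable [DecidableEq ι]

theorem det_one_sub_vecMulVec (u v : ι → R) : det (1 - vecMulVec u v) = 1 - v ⬝ᵥ u := by
  rw [vecMulVec_eq Unit, det_one_sub_mul_comm, det_unique, sub_apply, one_apply_eq,
    replicateRow_mul_replicateCol_apply]

/-- Left multiplication by `subRowMatrix i₀` subtracts row `i₀` from every other row. -/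
def subRowMatrix (i₀ : ι) : Matrix ι ι R :=
  1 - vecMulVec (1 - Pi.single i₀ 1) (Pi.single i₀ 1)

theorem det_subRowMatrix (i₀ : ι) : det (subRowMatrix i₀ : Matrix ι ι R) = 1 := by
  rw [subRowMatrix, det_one_sub_vecMulVec, single_one_dotProduct]
  simp

theorem subRowMatrix_mulVec_one (i₀ : ι) :
    (subRowMatrix i₀ : Matrix ι ι R) *ᵥ 1 = Pi.single i₀ 1 := by
  rw [subRowMatrix, sub_mulVec, one_mulVec, vecMulVec_mulVec, single_one_dotProduct]
  simp

theorem subRowMatrix_mul_apply {i₀ i : ι} (hi : i ≠ i₀) (M : Matrix ι ι R) (j : ι) :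
    (subRowMatrix i₀ * M : Matrix ι ι R) i j = M i j - M i₀ j := by
  simp [subRowMatrix, sub_mul, vecMulVec_mul, vecMulVec_apply, hi]

theorem mul_subRowMatrix_transpose_apply {i₀ j : ι} (hj : j ≠ i₀) (M : Matrix ι ι R) (i : ι) :
    (M * (subRowMatrix i₀)ᵀ : Matrix ι ι R) i j = M i j - M i i₀ := by
  rw [← transpose_apply (M * _), transpose_mul, transpose_transpose,
    subRowMatrix_mul_apply hj]
  rfl

theorem transpose_mul_adjugate_conj_mul {A : Matrix ι ι R} (hA : A.det = 1) (M : Matrix ι ι R) :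
    Aᵀ * adjugate (A * M * Aᵀ) * A = adjugate M := by
  have h : adjugate A * A = 1 := by rw [adjugate_mul, hA, one_smul]
  rw [adjugate_mul_distrib, adjugate_mul_distrib, ← adjugate_transpose, ← Matrix.mul_assoc,
    ← Matrix.mul_assoc, ← transpose_mul, h, transpose_one, Matrix.one_mul, Matrix.mul_assoc, h,
    Matrix.mul_one]

theorem sum_adjugate_eq_det_sub_row_col_zero {n : ℕ}
    (M : Matrix (Fin (n + 1)) (Fin (n + 1)) R) :
    ∑ i, ∑ j, M.adjugate i j =
      (of fun i j : Fin n => M i.succ j.succ - M i.succ 0 - M 0 j.succ + M 0 0).det := by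
  set P : Matrix (Fin (n + 1)) (Fin (n + 1)) R := subRowMatrix 0
  calc ∑ i, ∑ j, M.adjugate i j = ∑ i, ∑ j, (Pᵀ * (P * M * Pᵀ).adjugate * P) i j := by
        rw [transpose_mul_adjugate_conj_mul (det_subRowMatrix 0)]
    _ = (P * M * Pᵀ).adjugate 0 0 := by
        rw [sum_transpose_mul_mul_apply, subRowMatrix_mulVec_one,
          mulVec_single_one, single_one_dotProduct]
        rfl
    _ = ((P * M * Pᵀ).submatrix Fin.succ Fin.succ).det := by
        rw [adjugate_fin_succ_eq_det_submatrix]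
        simp
    _ = _ := by
        congr 1
        ext i j
        rw [submatrix_apply, mul_subRowMatrix_transpose_apply (Fin.succ_ne_zero j),
          subRowMatrix_mul_apply (Fin.succ_ne_zero i),
          subRowMatrix_mul_apply (Fin.succ_ne_zero i), of_apply]
        ring

end Matrix

/-- Cofactor-sum identity: for vectors `y₁,…,y_k ∈ ℝ^k` with Gram matrix `G`, the sum
`Σ_{i,j} (−1)^{i+j} det(G^{(i,j)})` of the cofactors of `G` equals the determinant of the
Gram matrix of the difference vectors `y₂−y₁, …, y_k−y₁`. -/
theorem cofactor_sum_gram_eq_det_gram_differences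
    (n : ℕ) (y : Fin (n + 1) → EuclideanSpace ℝ (Fin (n + 1))) :
    (∑ i : Fin (n + 1), ∑ j : Fin (n + 1), (-1 : ℝ) ^ ((i : ℕ) + (j : ℕ)) *
        ((Matrix.of fun i j : Fin (n + 1) => (inner ℝ (y i) (y j) : ℝ)).submatrix
          i.succAbove j.succAbove).det)
      = (Matrix.of fun i j : Fin n =>
          (inner ℝ (y i.succ - y 0) (y j.succ - y 0) : ℝ)).det := by
  set G : Matrix (Fin (n + 1)) (Fin (n + 1)) ℝ := Matrix.of fun i j => inner ℝ (y i) (y j)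
  calc _ = ∑ i, ∑ j, G.adjugate j i := by
        simp_rw [Matrix.adjugate_fin_succ_eq_det_submatrix]
    _ = ∑ i, ∑ j, G.adjugate i j := Finset.sum_comm
    _ = _ := by
        rw [Matrix.sum_adjugate_eq_det_sub_row_col_zero]
        congr 1
        ext i j
        simp only [G, Matrix.of_apply, inner_sub_left, inner_sub_right]
        ring
end

section
/- Let X be a finite metric space with at least two points, and let δ₀ = min{d(x₁,x₂) : x₁,x₂ ∈ X, x₁ ≠ x₂}. If X' is a finite metric space with d_GH(X,X') < δ₀/4, then X' admits a partition into exactly #X nonempty subsets such that any two points lying in the same part are at distance less than δ₀/2, and any two points lying in different parts are at distance greater than δ₀/2. -/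
/-!
Put `X` and `X'` in the optimal Gromov–Hausdorff coupling and send each point of `X'` to a point
of `X` at distance `< δ₀/4`. This map distorts distances by less than `δ₀/2` and its image is
`δ₀/2`-dense. Since distinct points of `X` are `δ₀` apart, the density forces surjectivity,
and the distortion bound turns "same image" into "distance `< δ₀/2`" and "different images"
into "distance `> δ₀/2`".
-/

open Metric Set

namespace GromovHausdorff

variable {X Y : Type*} [MetricSpace X] [CompactSpace X] [Nonempty X]
  [MetricSpace Y] [CompactSpace Y] [Nonempty Y] {r : ℝ}

theorem hausdorffEDist_optimalGHInj_ne_top :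
    hausdorffEDist (range (optimalGHInjl X Y)) (range (optimalGHInjr X Y)) ≠ ⊤ :=
  hausdorffEDist_ne_top_of_nonempty_of_bounded (range_nonempty _) (range_nonempty _)
    (isCompact_range (isometry_optimalGHInjl X Y).continuous).isBounded
    (isCompact_range (isometry_optimalGHInjr X Y).continuous).isBounded

theorem exists_dist_optimalGHInjr_lt (h : ghDist X Y < r) (x : X) :
    ∃ y, dist (optimalGHInjl X Y x) (optimalGHInjr X Y y) < r := by
  obtain ⟨_, ⟨y, rfl⟩, hy⟩ := exists_dist_lt_of_hausdorffDist_lt (mem_range_self x)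
    (hausdorffDist_optimal.trans_lt h) hausdorffEDist_optimalGHInj_ne_top
  exact ⟨y, hy⟩

theorem exists_dist_optimalGHInjl_lt (h : ghDist X Y < r) (y : Y) :
    ∃ x, dist (optimalGHInjl X Y x) (optimalGHInjr X Y y) < r := by
  obtain ⟨_, ⟨x, rfl⟩, hx⟩ := exists_dist_lt_of_hausdorffDist_lt' (mem_range_self y)
    (hausdorffDist_optimal.trans_lt h) hausdorffEDist_optimalGHInj_ne_top
  exact ⟨x, hx⟩

theorem exists_approx_isometry_of_ghDist_lt (h : ghDist X Y < r) :
    ∃ f : Y → X, (∀ a b, |dist (f a) (f b) - dist a b| < 2 * r) ∧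
      ∀ x, ∃ a, dist x (f a) < 2 * r := by
  set Φ := optimalGHInjl X Y
  set Ψ := optimalGHInjr X Y
  have hΦ : Isometry Φ := isometry_optimalGHInjl X Y
  have hΨ : Isometry Ψ := isometry_optimalGHInjr X Y
  choose f hf using exists_dist_optimalGHInjl_lt h
  refine ⟨f, fun a b => ?_, fun x => ?_⟩
  · calc |dist (f a) (f b) - dist a b|
        = dist (dist (Φ (f a)) (Φ (f b))) (dist (Ψ a) (Ψ b)) := by
          rw [hΦ.dist_eq, hΨ.dist_eq, Real.dist_eq]
      _ ≤ dist (Φ (f a)) (Ψ a) + dist (Φ (f b)) (Ψ b) := dist_dist_dist_le _ _ _ _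
      _ < 2 * r := by linarith [hf a, hf b]
  · obtain ⟨a, ha⟩ := exists_dist_optimalGHInjr_lt h x
    refine ⟨a, ?_⟩
    calc dist x (f a) = dist (Φ x) (Φ (f a)) := (hΦ.dist_eq _ _).symm
      _ ≤ dist (Φ x) (Ψ a) + dist (Φ (f a)) (Ψ a) := dist_triangle_right _ _ _
      _ < 2 * r := by linarith [hf a]

end GromovHausdorff

theorem exists_partition_of_ghDist_lt_general
    (X X' : Type*) [MetricSpace X] [Fintype X] [Nonempty X]
    [MetricSpace X'] [Fintype X'] [Nonempty X']
    (δ₀ : ℝ) (hδ : IsLeast {d : ℝ | ∃ x₁ x₂ : X, x₁ ≠ x₂ ∧ dist x₁ x₂ = d} δ₀)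
    (hGH : GromovHausdorff.ghDist X X' < δ₀ / 4) :
    ∃ f : X' → X, Function.Surjective f ∧
      (∀ a b : X', f a = f b → dist a b < δ₀ / 2) ∧
      (∀ a b : X', f a ≠ f b → δ₀ / 2 < dist a b) := by
  have hsep : ∀ x y : X, x ≠ y → δ₀ ≤ dist x y := fun x y h => hδ.2 ⟨x, y, h, rfl⟩
  have hδ₀ : 0 < δ₀ := by
    obtain ⟨x₁, x₂, hne, rfl⟩ := hδ.1
    exact dist_pos.2 hne
  obtain ⟨f, hdist, hdense⟩ := GromovHausdorff.exists_approx_isometry_of_ghDist_lt hGH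
  refine ⟨f, fun x => ?_, fun a b hab => ?_, fun a b hab => ?_⟩
  · obtain ⟨a, ha⟩ := hdense x
    refine ⟨a, by_contra fun hne => ?_⟩
    linarith [hsep _ _ (Ne.symm hne)]
  · have := (abs_lt.1 (hdist a b)).1
    rw [hab, dist_self] at this
    linarith
  · linarith [(abs_lt.1 (hdist a b)).2, hsep _ _ hab]

/-- If `X` is a finite metric space with at least two points, `δ₀` is the minimum
distance between distinct points of `X`, and `X'` is a finite metric space with
`d_GH(X, X') < δ₀/4`, then `X'` admits a partition into exactly `#X` nonempty parts
(the fibers of a surjection onto `X`) such that points in the same part are at distance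
less than `δ₀/2` and points in different parts are at distance greater than `δ₀/2`. -/
theorem exists_partition_of_ghDist_lt
    (X X' : Type*) [MetricSpace X] [Fintype X] [Nonempty X]
    [MetricSpace X'] [Fintype X'] [Nonempty X']
    (hcard : 2 ≤ Fintype.card X)
    (δ₀ : ℝ) (hδ : IsLeast {d : ℝ | ∃ x₁ x₂ : X, x₁ ≠ x₂ ∧ dist x₁ x₂ = d} δ₀)
    (hGH : GromovHausdorff.ghDist X X' < δ₀ / 4) :
    ∃ f : X' → X, Function.Surjective f ∧
      (∀ a b : X', f a = f b → dist a b < δ₀ / 2) ∧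
      (∀ a b : X', f a ≠ f b → δ₀ / 2 < dist a b) :=
  exists_partition_of_ghDist_lt_general X X' δ₀ hδ hGH
end

section
/- Let y₁, y₁', y₂, y₂' be points in ℝ³ with y₁ ≠ y₁' and y₂ ≠ y₂', and suppose every ordered triple of points chosen among {y₁, y₁', y₂, y₂'} satisfies the tri-similarity inequality. Then |((y₁'−y₁)/∥y₁'−y₁∥) · ((y₂'−y₂)/∥y₂'−y₂∥)| ≤ C · min{ ∥y₁'−y₁∥/∥y₂'−y₂∥, ∥y₂'−y₂∥/∥y₁'−y₁∥ }, where C = 1 − (1/2)·(min{∥y₁−y₂∥, ∥y₁'−y₂∥, ∥y₁−y₂'∥, ∥y₁'−y₂'∥})². -/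
/-!
Expanding `‖a - c‖²`, the tri-similarity inequality at the vertex `b` reads
`‖a - b‖² ‖c - b‖² / 4 ≤ ⟪a - b, c - b⟫`. Adding this at both ends of a side `[p, q]` of a
nondegenerate triangle, and using that the angle at the third vertex is acute, gives
`‖q - p‖ ≤ 2`; under that bound the vertex inequality also holds for degenerate triples.
Writing `y₁' - y₁ = (y₁' - y₂') + (y₂' - y₂) - (y₁ - y₂)` and applying the vertex inequality at
`y₂` and `y₂'` bounds `|⟪y₁' - y₁, y₂' - y₂⟫|` by `(1 - d² / 2) ‖y₂' - y₂‖²`, where `d` is the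
least cross distance, and symmetrically by `(1 - d² / 2) ‖y₁' - y₁‖²`. If `{y₁, y₁'} = {y₂, y₂'}`
there is no third point, but then `d = 0` and Cauchy–Schwarz suffices.
-/

open scoped RealInnerProductSpace

theorem exists_ne_ne_of_ne {α : Type*} {a a' b b' : α} (ha : a ≠ a')
    (h : ¬((a = b ∧ a' = b') ∨ (a = b' ∧ a' = b))) : ∃ x, (x = a ∨ x = a') ∧ x ≠ b ∧ x ≠ b' := by
  by_contra! H
  have := H a (.inl rfl)
  have := H a' (.inr rfl)
  grind

section
variable {E : Type*} [NormedAddCommGroup E] [InnerProductSpace ℝ E]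

theorem TriSim.le_inner {a b c : E} (h : TriSim a b c) :
    ‖a - b‖ ^ 2 * ‖c - b‖ ^ 2 / 4 ≤ ⟪a - b, c - b⟫ := by
  have hac : ‖a - c‖ ^ 2 = ‖a - b‖ ^ 2 - 2 * ⟪a - b, c - b⟫ + ‖c - b‖ ^ 2 := by
    rw [← norm_sub_sq_real, sub_sub_sub_cancel_right]
  rw [TriSim, hac, norm_sub_rev b c] at h
  linarith

def TriSimOn (S : Set E) : Prop :=
  ∀ a ∈ S, ∀ b ∈ S, ∀ c ∈ S, a ≠ b → b ≠ c → a ≠ c → TriSim a b c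

variable {S : Set E} {x p q : E}

theorem TriSimOn.norm_sub_le_two (hS : TriSimOn S) (hx : x ∈ S) (hp : p ∈ S) (hq : q ∈ S)
    (hxp : x ≠ p) (hxq : x ≠ q) : ‖q - p‖ ≤ 2 := by
  rcases eq_or_ne p q with rfl | hpq
  · simp
  have at_p := (hS x hx p hp q hq hxp hpq hxq).le_inner
  have at_q := (hS x hx q hq p hp hxq hpq.symm hxp).le_inner
  have at_x := (hS p hp x hx q hq hxp.symm hxq hpq).le_inner
  have hsum : ⟪x - p, q - p⟫ + ⟪x - q, p - q⟫ = ‖q - p‖ ^ 2 := by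
    rw [← real_inner_self_eq_norm_sq, ← neg_sub q p, inner_neg_right, ← sub_eq_add_neg,
      ← inner_sub_left, sub_sub_sub_cancel_left]
  have hpx : ‖q - p‖ ^ 2 ≤ ‖x - p‖ ^ 2 + ‖x - q‖ ^ 2 := by
    rw [← sub_sub_sub_cancel_right q p x, norm_sub_sq_real, real_inner_comm, norm_sub_rev x p,
      norm_sub_rev x q]
    nlinarith [mul_nonneg (sq_nonneg ‖p - x‖) (sq_nonneg ‖q - x‖)]
  have hpos : 0 < ‖q - p‖ ^ 2 := by
    have := norm_pos_iff.2 (sub_ne_zero.2 hpq.symm)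
    positivity
  rw [norm_sub_rev p q] at at_q
  have h4 : ‖x - p‖ ^ 2 + ‖x - q‖ ^ 2 ≤ 4 := by nlinarith
  nlinarith [norm_nonneg (q - p)]

theorem TriSimOn.le_inner (hS : TriSimOn S) (hx : x ∈ S) (hp : p ∈ S) (hq : q ∈ S)
    (hpq : ‖q - p‖ ≤ 2) : ‖x - p‖ ^ 2 * ‖q - p‖ ^ 2 / 4 ≤ ⟪x - p, q - p⟫ := by
  rcases eq_or_ne x p with rfl | hxp
  · simp
  rcases eq_or_ne x q with rfl | hxq
  · rw [real_inner_self_eq_norm_sq]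
    have h4 := pow_le_pow_left₀ (norm_nonneg _) hpq 2
    nlinarith [mul_le_mul_of_nonneg_left h4 (sq_nonneg ‖x - p‖)]
  rcases eq_or_ne p q with rfl | hpq
  · simp
  exact (hS x hx p hp q hq hxp hpq hxq).le_inner

variable {a a' b b' : E} {d : ℝ}

theorem TriSimOn.inner_le (hS : TriSimOn S) (ha : a ∈ S) (ha' : a' ∈ S) (hb : b ∈ S)
    (hb' : b' ∈ S) (hbb' : ‖b' - b‖ ≤ 2) (hd : 0 ≤ d) (hab : d ≤ ‖a - b‖)
    (hab' : d ≤ ‖a' - b'‖) : ⟪a' - a, b' - b⟫ ≤ (1 - 1 / 2 * d ^ 2) * ‖b' - b‖ ^ 2 := by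
  have at_b := hS.le_inner ha hb hb' hbb'
  have at_b' := hS.le_inner ha' hb' hb (by rwa [norm_sub_rev])
  have hsplit : ⟪a' - a, b' - b⟫ = ‖b' - b‖ ^ 2 - ⟪a' - b', b - b'⟫ - ⟪a - b, b' - b⟫ := by
    rw [show a' - a = (b' - b) + (a' - b') - (a - b) by abel, inner_sub_left, inner_add_left,
      ← neg_sub b' b, inner_neg_right, real_inner_self_eq_norm_sq]
    ring
  rw [norm_sub_rev b b'] at at_b'
  have hab2 := pow_le_pow_left₀ hd hab 2
  have hab'2 := pow_le_pow_left₀ hd hab' 2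
  nlinarith [sq_nonneg ‖b' - b‖]

theorem TriSimOn.abs_inner_le (hS : TriSimOn S) (ha : a ∈ S) (ha' : a' ∈ S) (hb : b ∈ S)
    (hb' : b' ∈ S) (hbb' : ‖b' - b‖ ≤ 2) (hd : 0 ≤ d) (h₁ : d ≤ ‖a - b‖) (h₂ : d ≤ ‖a' - b‖)
    (h₃ : d ≤ ‖a - b'‖) (h₄ : d ≤ ‖a' - b'‖) :
    |⟪a' - a, b' - b⟫| ≤ (1 - 1 / 2 * d ^ 2) * ‖b' - b‖ ^ 2 := by
  rw [abs_le, neg_le, ← inner_neg_left, neg_sub]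
  exact ⟨hS.inner_le ha' ha hb hb' hbb' hd h₂ h₃, hS.inner_le ha ha' hb hb' hbb' hd h₁ h₄⟩

theorem abs_inner_smul_le_mul_min {u v : E} (hu : u ≠ 0) (hv : v ≠ 0) {C : ℝ}
    (hCu : |⟪u, v⟫| ≤ C * ‖u‖ ^ 2) (hCv : |⟪u, v⟫| ≤ C * ‖v‖ ^ 2) :
    |⟪‖u‖⁻¹ • u, ‖v‖⁻¹ • v⟫| ≤ C * min (‖u‖ / ‖v‖) (‖v‖ / ‖u‖) := by
  have hu0 := norm_pos_iff.2 hu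
  have hv0 := norm_pos_iff.2 hv
  rw [real_inner_smul_left, real_inner_smul_right, abs_mul, abs_mul, abs_inv, abs_inv, abs_norm,
    abs_norm]
  rcases min_choice (‖u‖ / ‖v‖) (‖v‖ / ‖u‖) with h | h <;> rw [h]
  · calc ‖u‖⁻¹ * (‖v‖⁻¹ * |⟪u, v⟫|) ≤ ‖u‖⁻¹ * (‖v‖⁻¹ * (C * ‖u‖ ^ 2)) := by gcongr
      _ = C * (‖u‖ / ‖v‖) := by field_simp
  · calc ‖u‖⁻¹ * (‖v‖⁻¹ * |⟪u, v⟫|) ≤ ‖u‖⁻¹ * (‖v‖⁻¹ * (C * ‖v‖ ^ 2)) := by gcongr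
      _ = C * (‖v‖ / ‖u‖) := by field_simp

theorem TriSimOn.abs_inner_le_mul_norm_sq (hS : TriSimOn ({a, a', b, b'} : Set E))
    (ha : a ≠ a') (hb : b ≠ b') (hd : 0 ≤ d) (h₁ : d ≤ ‖a - b‖) (h₂ : d ≤ ‖a' - b‖)
    (h₃ : d ≤ ‖a - b'‖) (h₄ : d ≤ ‖a' - b'‖) :
    |⟪a' - a, b' - b⟫| ≤ (1 - 1 / 2 * d ^ 2) * ‖a' - a‖ ^ 2 ∧
      |⟪a' - a, b' - b⟫| ≤ (1 - 1 / 2 * d ^ 2) * ‖b' - b‖ ^ 2 := by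
  by_cases hdeg : (a = b ∧ a' = b') ∨ (a = b' ∧ a' = b)
  · obtain ⟨rfl, hnorm⟩ : d = 0 ∧ ‖b' - b‖ = ‖a' - a‖ := by
      rcases hdeg with ⟨rfl, rfl⟩ | ⟨rfl, rfl⟩
      · simp at h₁
        exact ⟨by linarith, rfl⟩
      · simp at h₃
        exact ⟨by linarith, norm_sub_rev _ _⟩
    have hcs := abs_real_inner_le_norm (a' - a) (b' - b)
    rw [hnorm] at hcs ⊢
    constructor <;> linarith
  obtain ⟨x, hx, hxb, hxb'⟩ := exists_ne_ne_of_ne ha hdeg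
  obtain ⟨y, hy, hya, hya'⟩ := exists_ne_ne_of_ne hb (b := a) (b' := a') (by grind)
  have hbb' : ‖b' - b‖ ≤ 2 :=
    hS.norm_sub_le_two (by rcases hx with rfl | rfl <;> simp) (by simp) (by simp) hxb hxb'
  have haa' : ‖a' - a‖ ≤ 2 :=
    hS.norm_sub_le_two (by rcases hy with rfl | rfl <;> simp) (by simp) (by simp) hya hya'
  refine ⟨?_, hS.abs_inner_le (by simp) (by simp) (by simp) (by simp) hbb' hd h₁ h₂ h₃ h₄⟩
  rw [real_inner_comm]
  rw [norm_sub_rev] at h₁ h₂ h₃ h₄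
  exact hS.abs_inner_le (by simp) (by simp) (by simp) (by simp) haa' hd h₁ h₃ h₂ h₄

end

/-- If `y₁ ≠ y₁'` and `y₂ ≠ y₂'` in `ℝ³` and every triple of distinct points among
`{y₁, y₁', y₂, y₂'}` satisfies the tri-similarity inequality, then the inner product of
the unit vectors in the directions `y₁' − y₁` and `y₂' − y₂` is bounded by
`C · min(‖y₁'−y₁‖/‖y₂'−y₂‖, ‖y₂'−y₂‖/‖y₁'−y₁‖)` with
`C = 1 − ½ (min of the four cross distances)²`. -/
theorem inner_unit_dir_le_of_triSim
    (y₁ y₁' y₂ y₂' : EuclideanSpace ℝ (Fin 3))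
    (h₁ : y₁ ≠ y₁') (h₂ : y₂ ≠ y₂')
    (htri : ∀ a ∈ ({y₁, y₁', y₂, y₂'} : Set (EuclideanSpace ℝ (Fin 3))),
      ∀ b ∈ ({y₁, y₁', y₂, y₂'} : Set (EuclideanSpace ℝ (Fin 3))),
      ∀ c ∈ ({y₁, y₁', y₂, y₂'} : Set (EuclideanSpace ℝ (Fin 3))),
        a ≠ b → b ≠ c → a ≠ c → TriSim a b c) :
    |(inner ℝ ((‖y₁' - y₁‖)⁻¹ • (y₁' - y₁)) ((‖y₂' - y₂‖)⁻¹ • (y₂' - y₂)) : ℝ)|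
      ≤ (1 - (1 / 2) * (min (min ‖y₁ - y₂‖ ‖y₁' - y₂‖) (min ‖y₁ - y₂'‖ ‖y₁' - y₂'‖)) ^ 2) *
        min (‖y₁' - y₁‖ / ‖y₂' - y₂‖) (‖y₂' - y₂‖ / ‖y₁' - y₁‖) := by
  have hd : 0 ≤ min (min ‖y₁ - y₂‖ ‖y₁' - y₂‖) (min ‖y₁ - y₂'‖ ‖y₁' - y₂'‖) := by positivity
  obtain ⟨hu, hv⟩ := TriSimOn.abs_inner_le_mul_norm_sq htri h₁ h₂ hd
    ((min_le_left _ _).trans (min_le_left _ _)) ((min_le_left _ _).trans (min_le_right _ _))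
    ((min_le_right _ _).trans (min_le_left _ _)) ((min_le_right _ _).trans (min_le_right _ _))
  exact abs_inner_smul_le_mul_min (sub_ne_zero.2 h₁.symm) (sub_ne_zero.2 h₂.symm) hu hv
end

section
/- Let Y = {A, B, C, D} be a set of four affinely independent points in ℝ³ such that every angle determined by three of the points is acute, i.e., (P−Q)·(R−Q) > 0 for all pairwise distinct P, Q, R ∈ Y. Then the circumradius satisfies ρ_Y ≤ 2·diam Y. In particular, every four-point similarity embedding Y ⊂ ℝ³ satisfies ρ_Y ≤ 2·diam Y. -/
/-!
If `o` is at distance `ρ` from four points `p i` of a space of dimension at most three, the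
vectors `p i - o` are linearly dependent, so their Gram matrix, with entries
`ρ² - |p i p j|² / 2`, is singular. Its determinant is a polynomial in `ρ²` and the six squared
edge lengths. When all twelve face angles are acute and `ρ² > 4 |p i p j|²` for every edge, this
polynomial is a positive combination of products of the positive quantities
`|xy|² + |yz|² - |xz|²` (law of cosines) and `ρ² - 4 |p i p j|²`, a contradiction; hence
`ρ ≤ 2 diam`. The tri-similarity inequality makes every angle of a similarity embedding acute.
-/

open Metric

noncomputable section

open Set Matrix Module
open scoped InnerProductSpace

/-- The Gram matrix of the vectors `p i - o` when the four points `p i` lie on a sphere of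
squared radius `s` about `o`; here `a, b, c, d, e, f` are the squared distances
`|p₀p₁|², |p₀p₂|², |p₀p₃|², |p₁p₂|², |p₁p₃|², |p₂p₃|²`. -/
def sphereGram (s a b c d e f : ℝ) : Matrix (Fin 4) (Fin 4) ℝ :=
  !![s, s - a / 2, s - b / 2, s - c / 2;
    s - a / 2, s, s - d / 2, s - e / 2;
    s - b / 2, s - d / 2, s, s - f / 2;
    s - c / 2, s - e / 2, s - f / 2, s]

/-- `x, y, z` are the squared side lengths of an acute triangle. -/
def AcuteSqSides (x y z : ℝ) : Prop :=
  0 < x + y - z ∧ 0 < y + z - x ∧ 0 < z + x - y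

theorem sphereGram_det_pos {s a b c d e f : ℝ} (h₀₁₂ : AcuteSqSides a d b)
    (h₀₁₃ : AcuteSqSides a e c) (h₀₂₃ : AcuteSqSides b f c) (h₁₂₃ : AcuteSqSides d f e)
    (ha : 4 * a < s) (hb : 4 * b < s) (hc : 4 * c < s) (hd : 4 * d < s) (he : 4 * e < s)
    (hf : 4 * f < s) : 0 < (sphereGram s a b c d e f).det := by
  obtain ⟨t3, t2, t1⟩ := h₀₁₂
  obtain ⟨t6, t5, t4⟩ := h₀₁₃
  obtain ⟨t9, t8, t7⟩ := h₀₂₃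
  obtain ⟨t12, t11, t10⟩ := h₁₂₃
  have u1 := sub_pos.2 ha
  have u2 := sub_pos.2 hb
  have u3 := sub_pos.2 hc
  have u4 := sub_pos.2 hd
  have u5 := sub_pos.2 he
  have u6 := sub_pos.2 hf
  have m4 {w x y z : ℝ} (hw : 0 < w) (hx : 0 < x) (hy : 0 < y) (hz : 0 < z) :
      0 < w * x * y * z := by positivity
  simp only [sphereGram, det_succ_row_zero, Fin.sum_univ_succ, det_unique, submatrix_apply,
    of_apply, cons_val, Fin.succAbove, Fin.default_eq_zero, Fin.coe_ofNat_eq_mod, Fin.reduceSucc,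
    Fin.reduceCastSucc, Fin.reduceLT, ↓reduceIte]
  -- `16 * det` is a positive combination of these products (an LP certificate)
  linarith [m4 t1 t1 t5 t12, m4 t1 t1 t8 t10, m4 t2 t4 t4 t11, m4 t2 t6 t8 t8, m4 t3 t5 t5 t9,
    m4 t3 t7 t7 t11, m4 t4 t9 t10 t10, m4 t6 t7 t7 t12, m4 t1 t2 t8 t10, m4 t1 t3 t5 t12,
    m4 t1 t5 t6 t12, m4 t1 t5 t10 t12, m4 t1 t8 t9 t10, m4 t1 t8 t10 t12, m4 t2 t4 t6 t8,
    m4 t2 t4 t6 t11, m4 t2 t4 t10 t11, m4 t2 t6 t7 t8, m4 t3 t4 t5 t9, m4 t3 t5 t7 t9,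
    m4 t3 t7 t9 t11, m4 t3 t7 t11 t12, m4 t4 t9 t10 t11, m4 t6 t7 t8 t12, m4 t1 t5 t12 u1,
    m4 t1 t5 t12 u4, m4 t1 t5 t12 u5, m4 t1 t8 t10 u2, m4 t1 t8 t10 u4, m4 t1 t8 t10 u6,
    m4 t2 t4 t11 u1, m4 t2 t4 t11 u4, m4 t2 t4 t11 u5, m4 t2 t6 t8 u1, m4 t2 t6 t8 u2,
    m4 t2 t6 t8 u3, m4 t3 t5 t9 u1, m4 t3 t5 t9 u2, m4 t3 t5 t9 u3, m4 t3 t7 t11 u2,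
    m4 t3 t7 t11 u4, m4 t3 t7 t11 u6, m4 t4 t9 t10 u3, m4 t4 t9 t10 u5, m4 t4 t9 t10 u6,
    m4 t6 t7 t12 u3, m4 t6 t7 t12 u5, m4 t6 t7 t12 u6]

theorem det_gram_eq_zero_of_finrank_lt {𝕜 E ι : Type*} [RCLike 𝕜] [NormedAddCommGroup E]
    [InnerProductSpace 𝕜 E] [FiniteDimensional 𝕜 E] [Fintype ι] [DecidableEq ι] (v : ι → E)
    (h : finrank 𝕜 E < Fintype.card ι) : (gram 𝕜 v).det = 0 := by
  by_contra hdet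
  exact h.not_ge (linearIndependent_of_det_gram_ne_zero hdet).fintype_card_le_finrank

section InnerProductSpace

variable {E : Type*} [NormedAddCommGroup E] [InnerProductSpace ℝ E]

theorem circumradius_le_of_forall_isCircum {Y : Set E} {r : ℝ} (hr : 0 ≤ r)
    (h : ∀ o ρ, IsCircum Y o ρ → ρ ≤ r) : circumradius Y ≤ r := by
  unfold circumradius circumData
  split_ifs with hex
  · exact h _ _ hex.choose_spec.1
  · exact hr

theorem real_inner_sub_sub_eq_dist_sq (x y z : E) :
    ⟪x - y, z - y⟫_ℝ = (dist x y ^ 2 + dist z y ^ 2 - dist x z ^ 2) / 2 := by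
  rw [real_inner_eq_norm_mul_self_add_norm_mul_self_sub_norm_sub_mul_self_div_two,
    sub_sub_sub_cancel_right, dist_eq_norm, dist_eq_norm, dist_eq_norm]
  ring

theorem real_inner_sub_sub_of_dist_eq {x y o : E} {ρ : ℝ} (hx : dist o x = ρ)
    (hy : dist o y = ρ) : ⟪x - o, y - o⟫_ℝ = ρ ^ 2 - dist x y ^ 2 / 2 := by
  rw [real_inner_sub_sub_eq_dist_sq, dist_comm x, dist_comm y, hx, hy]
  ring

theorem TriSim.inner_pos {a b c : E} (h : TriSim a b c) (hab : a ≠ b) (hbc : b ≠ c) :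
    0 < ⟪a - b, c - b⟫_ℝ := by
  have hab' : 0 < ‖a - b‖ ^ 2 := by positivity [sub_ne_zero.2 hab]
  have hbc' : 0 < ‖b - c‖ ^ 2 := by positivity [sub_ne_zero.2 hbc]
  rw [TriSim] at h
  rw [real_inner_sub_sub_eq_dist_sq, dist_eq_norm, dist_eq_norm, dist_eq_norm, norm_sub_rev c]
  nlinarith [mul_pos hab' hbc']

theorem acuteSqSides_dist {x y z : E} (hx : 0 < ⟪y - x, z - x⟫_ℝ) (hy : 0 < ⟪x - y, z - y⟫_ℝ)
    (hz : 0 < ⟪x - z, y - z⟫_ℝ) : AcuteSqSides (dist x y ^ 2) (dist y z ^ 2) (dist x z ^ 2) := by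
  rw [real_inner_sub_sub_eq_dist_sq, dist_comm y x, dist_comm z x] at hx
  rw [real_inner_sub_sub_eq_dist_sq, dist_comm z y] at hy
  rw [real_inner_sub_sub_eq_dist_sq] at hz
  exact ⟨by linarith, by linarith, by linarith⟩

theorem gram_sub_eq_sphereGram {p : Fin 4 → E} {o : E} {ρ : ℝ} (hρ : ∀ i, dist o (p i) = ρ) :
    gram ℝ (fun i => p i - o) =
      sphereGram (ρ ^ 2) (dist (p 0) (p 1) ^ 2) (dist (p 0) (p 2) ^ 2) (dist (p 0) (p 3) ^ 2)
        (dist (p 1) (p 2) ^ 2) (dist (p 1) (p 3) ^ 2) (dist (p 2) (p 3) ^ 2) := by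
  ext i j
  rw [gram_apply, real_inner_sub_sub_of_dist_eq (hρ i) (hρ j)]
  fin_cases i <;> fin_cases j <;>
    simp only [sphereGram, of_apply, cons_val', cons_val, cons_val_fin_one, Fin.zero_eta,
      Fin.mk_one, Fin.reduceFinMk, dist_self, zero_pow two_ne_zero, zero_div, sub_zero] <;>
    rw [dist_comm]

variable [FiniteDimensional ℝ E]

theorem le_two_mul_diam_of_forall_dist_eq (hE : finrank ℝ E ≤ 3) {p : Fin 4 → E}
    (hacute : ∀ i j k, i ≠ j → j ≠ k → i ≠ k → 0 < ⟪p i - p j, p k - p j⟫_ℝ) {o : E} {ρ : ℝ}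
    (hρ : ∀ i, dist o (p i) = ρ) : ρ ≤ 2 * diam (range p) := by
  by_contra! hlt
  have hedge (i j : Fin 4) : 4 * dist (p i) (p j) ^ 2 < ρ ^ 2 := by
    have := dist_le_diam_of_mem (finite_range p).isBounded (mem_range_self i) (mem_range_self j)
    nlinarith [dist_nonneg (x := p i) (y := p j)]
  have hface (i j k : Fin 4) (hij : i ≠ j) (hjk : j ≠ k) (hik : i ≠ k) :
      AcuteSqSides (dist (p i) (p j) ^ 2) (dist (p j) (p k) ^ 2) (dist (p i) (p k) ^ 2) :=
    acuteSqSides_dist (hacute j i k hij.symm hik hjk) (hacute i j k hij hjk hik)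
      (hacute i k j hik hjk.symm hij)
  have hdet := det_gram_eq_zero_of_finrank_lt (𝕜 := ℝ) (fun i => p i - o) (by simp; omega)
  rw [gram_sub_eq_sphereGram hρ] at hdet
  refine (sphereGram_det_pos (hface 0 1 2 ?_ ?_ ?_) (hface 0 1 3 ?_ ?_ ?_) (hface 0 2 3 ?_ ?_ ?_)
    (hface 1 2 3 ?_ ?_ ?_) (hedge 0 1) (hedge 0 2) (hedge 0 3) (hedge 1 2) (hedge 1 3)
    (hedge 2 3)).ne' hdet <;> decide

theorem circumradius_le_two_mul_diam_of_acute (hE : finrank ℝ E ≤ 3) {Y : Set E} (hY : Y.ncard = 4)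
    (hacute : ∀ P ∈ Y, ∀ Q ∈ Y, ∀ R ∈ Y, P ≠ Q → Q ≠ R → P ≠ R → 0 < ⟪P - Q, R - Q⟫_ℝ) :
    circumradius Y ≤ 2 * diam Y := by
  obtain ⟨n, p, hp, rfl⟩ := (finite_of_ncard_ne_zero (by omega : Y.ncard ≠ 0)).fin_param
  rw [ncard_range_of_injective hp, Nat.card_eq_fintype_card, Fintype.card_fin] at hY
  subst hY
  refine circumradius_le_of_forall_isCircum (by positivity) fun o ρ ho =>
    le_two_mul_diam_of_forall_dist_eq hE (fun i j k hij hjk hik => ?_) fun i => ho.2 _ ⟨i, rfl⟩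
  exact hacute _ ⟨i, rfl⟩ _ ⟨j, rfl⟩ _ ⟨k, rfl⟩ (hp.ne hij) (hp.ne hjk) (hp.ne hik)

end InnerProductSpace

/-- If all angles determined by three of the four affinely independent points
`A, B, C, D ∈ ℝ³` are acute, then the circumradius of `{A,B,C,D}` is at most twice the
diameter; in particular this holds for every four-point similarity embedding in `ℝ³`. -/
theorem circumradius_le_two_diam_of_acute
    (A B C D : EuclideanSpace ℝ (Fin 3))
    (hindep : AffineIndependent ℝ ![A, B, C, D])
    (hacute : ∀ P ∈ ({A, B, C, D} : Set (EuclideanSpace ℝ (Fin 3))),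
      ∀ Q ∈ ({A, B, C, D} : Set (EuclideanSpace ℝ (Fin 3))),
      ∀ R ∈ ({A, B, C, D} : Set (EuclideanSpace ℝ (Fin 3))),
        P ≠ Q → Q ≠ R → P ≠ R → (0 : ℝ) < inner ℝ (P - Q) (R - Q)) :
    circumradius ({A, B, C, D} : Set (EuclideanSpace ℝ (Fin 3)))
        ≤ 2 * Metric.diam ({A, B, C, D} : Set (EuclideanSpace ℝ (Fin 3))) ∧
      ∀ Y : Set (EuclideanSpace ℝ (Fin 3)), IsSimEmb Y → Y.ncard = 4 →
        circumradius Y ≤ 2 * Metric.diam Y := by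
  have hcard : ({A, B, C, D} : Set (EuclideanSpace ℝ (Fin 3))).ncard = 4 := by
    simpa only [range_cons, range_empty, union_empty, singleton_union, Nat.card_eq_fintype_card,
      Fintype.card_fin] using ncard_range_of_injective hindep.injective
  refine ⟨circumradius_le_two_mul_diam_of_acute (by simp) hcard hacute, fun Y hY hYcard => ?_⟩
  exact circumradius_le_two_mul_diam_of_acute (by simp) hYcard
    fun P hP Q hQ R hR hPQ hQR _ => (hY.2.2.2.2 P hP Q hQ R hR).inner_pos hPQ hQR
end
end

section
/- Let Y₁ ⊆ Y₂ be similarity embeddings in ℝ^d ⊂ ℝ^{d+1}, and let c₀, c₁, c₂, c₃ be positive constants with 0 < c₀ ≤ 1, c₂ ≤ 2, such that ρ_{Y₂} < c₀, √(ρ_{Y₂}² − ρ_{Y₁}²) > c₁, diam Y₂ < c₂·ρ_{Y₂}, and c₀⁻¹ + √(c₀⁻² − 1) < c₃. Let y' ∈ ℝ^{d+1} be a point whose orthogonal projection onto the affine span of Y₂ equals the circumcenter K_{Y₂} and which satisfies ∥K_{Y₂} − y'∥ = c₃·ρ_{Y₂}. Then there exist δ₀ > 0 and δ₁ > 0, depending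 only on c₀, c₁, c₂, c₃, such that the sets Y₁' := Y₁ ∪ {y'} and Y₂' := Y₂ ∪ {y'} satisfy √(ρ_{Y₂'}² − ρ_{Y₁'}²) > δ₀, and for every real u with 0 < u < δ₁ the dilated sets u·Y₁' and u·Y₂' are similarity embeddings. -/
/-!
If `Y` has circumcenter `K` and circumradius `ρ`, and `y' - K` is orthogonal to the span of `Y`
with `‖y' - K‖ = L`, then the circumsphere of `Y ∪ {y'}` has its centre on the segment from `K`
to `y'` and radius `(L² + ρ²) / (2L)`.
For `Y₁ ⊆ Y₂`, the point `y'` also lies orthogonally above the circumcenter `K₁` of `Y₁`, at a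
height `L₁ ≥ L` with `L₁² + ρ₁² = L² + ρ₂²`, since both sides are `‖y' - y‖²` for `y ∈ Y₁`.
Comparing `(L² + ρ₂²) / (2L)` with `(L² + ρ₂²) / (2L₁)` then gives
`ρ_{Y₂'}² - ρ_{Y₁'}² ≥ (ρ₂² - ρ₁²) / 4`.

After dilation by `u`, the tri-similarity inequality for `(a, b, c)` reads
`u²/4 · ‖a - b‖² ‖b - c‖² ≤ ⟪b - a, b - c⟫`. When `b = y'` the inner product is at least
`L² - ρ² = (c₃² - 1) ρ²`, which is positive because `c₃ > 1`. When `a = y'` and `b, c ∈ Y` it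
is `‖b - c‖² / 2`. These constraints, and `u · ρ_{Y₂'} < 1`, all hold for
`u < (c₃ - 1) / (c₃² + 1)`, because `(c₃ - 1)² ≤ c₃² - 1`.
-/

open Metric Pointwise

noncomputable section

/-- The circumcenter of a subset of a Euclidean space. -/
noncomputable def circumcenter {E : Type*} [NormedAddCommGroup E] [InnerProductSpace ℝ E]
    (Y : Set E) : E := (circumData Y).1

open scoped RealInnerProductSpace

section Circumsphere

variable {E : Type*} [NormedAddCommGroup E] [InnerProductSpace ℝ E] {Y : Set E} {K y' : E}
  {ρ : ℝ}

theorem mem_orthogonal_vectorSpan_iff {v : E} :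
    v ∈ (vectorSpan ℝ Y)ᗮ ↔ ∀ y ∈ Y, ∀ z ∈ Y, ⟪v, y - z⟫ = 0 := by
  refine ⟨fun hv y hy z hz ↦
    Submodule.inner_left_of_mem_orthogonal (vsub_mem_vectorSpan ℝ hy hz) hv, fun h ↦ ?_⟩
  rw [Submodule.mem_orthogonal']
  intro w hw
  rw [vectorSpan_def] at hw
  refine (Submodule.span_le (p := LinearMap.ker (innerₛₗ ℝ v))).2 ?_ hw
  rintro _ ⟨y, hy, z, hz, rfl⟩
  exact h y hy z hz

theorem sub_mem_orthogonal_vectorSpan_of_dist_eq {K₁ K₂ : E} {ρ₁ ρ₂ : ℝ}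
    (h₁ : ∀ y ∈ Y, dist K₁ y = ρ₁) (h₂ : ∀ y ∈ Y, dist K₂ y = ρ₂) :
    K₂ - K₁ ∈ (vectorSpan ℝ Y)ᗮ :=
  mem_orthogonal_vectorSpan_iff.2 fun y hy z hz ↦
    EuclideanGeometry.inner_vsub_vsub_of_dist_eq_of_dist_eq (p₁ := z)
      (by rw [dist_comm z, dist_comm y, h₁ z hz, h₁ y hy])
      (by rw [dist_comm z, dist_comm y, h₂ z hz, h₂ y hy])

theorem norm_sub_sq_of_inner_eq_zero {y : E} (hy : dist K y = ρ)
    (h : ⟪y' - K, K - y⟫ = 0) : ‖y' - y‖ ^ 2 = ‖y' - K‖ ^ 2 + ρ ^ 2 := by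
  rw [← sub_add_sub_cancel y' K y, norm_add_sq_real, h, ← dist_eq_norm K y, hy]
  ring

theorem mem_orthogonal_vectorSpan_of_inner_eq_zero {v : E}
    (h : ∀ y ∈ Y, ⟪v, K - y⟫ = 0) : v ∈ (vectorSpan ℝ Y)ᗮ :=
  mem_orthogonal_vectorSpan_iff.2 fun y hy z hz ↦ by
    rw [← sub_sub_sub_cancel_left z y K, inner_sub_right, h z hz, h y hy, sub_zero]

namespace IsCircum

theorem inner_sub_eq_zero (hY : IsCircum Y K ρ) {v y : E} (hv : v ∈ (vectorSpan ℝ Y)ᗮ)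
    (hy : y ∈ Y) : ⟪v, K - y⟫ = 0 :=
  Submodule.inner_left_of_mem_orthogonal
    (vsub_mem_vectorSpan_of_mem_affineSpan_of_mem_affineSpan hY.1 (mem_affineSpan ℝ hy)) hv

theorem center_eq {K' : E} {ρ' : ℝ} (hY : IsCircum Y K ρ) (hY' : IsCircum Y K' ρ') : K = K' := by
  have hmem : K - K' ∈ vectorSpan ℝ Y ⊓ (vectorSpan ℝ Y)ᗮ :=
    ⟨vsub_mem_vectorSpan_of_mem_affineSpan_of_mem_affineSpan hY.1 hY'.1,
      sub_mem_orthogonal_vectorSpan_of_dist_eq hY'.2 hY.2⟩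
  rw [Submodule.inf_orthogonal_eq_bot, Submodule.mem_bot, sub_eq_zero] at hmem
  exact hmem

theorem circumradius_eq (hY : IsCircum Y K ρ) (hρ : 0 ≤ ρ) : circumradius Y = ρ := by
  have hex : ∃ p : E × ℝ, IsCircum Y p.1 p.2 ∧ 0 ≤ p.2 := ⟨(K, ρ), hY, hρ⟩
  obtain ⟨hc, -⟩ := hex.choose_spec
  obtain ⟨y, hy⟩ : Y.Nonempty := (affineSpan_nonempty (k := ℝ)).1 ⟨K, hY.1⟩
  rw [circumradius, circumData, dif_pos hex, ← hc.2 y hy, ← hY.2 y hy, hc.center_eq hY]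

theorem smul (hY : IsCircum Y K ρ) {u : ℝ} (hu : 0 < u) : IsCircum (u • Y) (u • K) (u * ρ) := by
  refine ⟨?_, ?_⟩
  · rw [← AffineSubspace.smul_span]
    exact Set.smul_mem_smul_set hY.1
  · rintro _ ⟨y, hy, rfl⟩
    rw [dist_smul₀, Real.norm_of_nonneg hu.le, hY.2 y hy]

theorem insert_of_mem_orthogonal (hY : IsCircum Y K ρ) (hv : y' - K ∈ (vectorSpan ℝ Y)ᗮ)
    (hy' : y' ≠ K) :
    IsCircum (insert y' Y)
      (AffineMap.lineMap K y' ((‖y' - K‖ ^ 2 - ρ ^ 2) / (2 * ‖y' - K‖ ^ 2)))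
      ((‖y' - K‖ ^ 2 + ρ ^ 2) / (2 * ‖y' - K‖)) := by
  set L := ‖y' - K‖ with hLdef
  have hL : 0 < L := norm_pos_iff.2 (sub_ne_zero.2 hy')
  -- the centre lies at height `h = s * L` above `K`, where `ρ ^ 2 + h ^ 2 = (L - h) ^ 2`
  set s := (L ^ 2 - ρ ^ 2) / (2 * L ^ 2) with hs
  have hc : AffineMap.lineMap K y' s = K + s • (y' - K) := by
    rw [AffineMap.lineMap_apply, vsub_eq_sub, vadd_eq_add, add_comm]
  refine ⟨AffineMap.lineMap_mem s (affineSpan_mono ℝ (Set.subset_insert _ _) hY.1)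
    (mem_affineSpan ℝ (Set.mem_insert _ _)), Set.forall_mem_insert.2 ⟨?_, fun y hy ↦ ?_⟩⟩
  · have hs1 : s ≤ 1 := by
      rw [div_le_one (by positivity)]
      nlinarith
    rw [hc, dist_comm, dist_eq_norm, show y' - (K + s • (y' - K)) = (1 - s) • (y' - K) by
      rw [sub_smul, one_smul]; abel, norm_smul, Real.norm_of_nonneg (by linarith), ← hLdef, hs]
    field_simp
    ring
  · rw [← sq_eq_sq₀ dist_nonneg (by positivity), hc, dist_eq_norm,
      show K + s • (y' - K) - y = s • (y' - K) + (K - y) by abel,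
      norm_add_sq_real, inner_smul_left, hY.inner_sub_eq_zero hv hy, norm_smul,
      ← hLdef, ← dist_eq_norm K y, hY.2 y hy, Real.norm_eq_abs, mul_pow, sq_abs, hs]
    field_simp
    ring

theorem circumradius_insert (hY : IsCircum Y K ρ)
    (hv : y' - K ∈ (vectorSpan ℝ Y)ᗮ) (hy' : y' ≠ K) :
    circumradius (insert y' Y) = (‖y' - K‖ ^ 2 + ρ ^ 2) / (2 * ‖y' - K‖) :=
  (hY.insert_of_mem_orthogonal hv hy').circumradius_eq (by positivity)

end IsCircum

theorem circumradius_nonneg (Y : Set E) : 0 ≤ circumradius Y := by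
  unfold circumradius circumData
  split
  · next h => exact h.choose_spec.2
  · exact le_rfl

theorem isCircum_circumcenter (h : circumradius Y ≠ 0) :
    IsCircum Y (circumcenter Y) (circumradius Y) := by
  unfold circumcenter circumradius circumData at *
  split at h
  · next hex => simpa [dif_pos hex] using hex.choose_spec.1
  · exact absurd rfl h

theorem circumradius_smul {u : ℝ} (hu : 0 < u) (Y : Set E) :
    circumradius (u • Y) = u * circumradius Y := by
  by_cases h : ∃ p : E × ℝ, IsCircum Y p.1 p.2 ∧ 0 ≤ p.2
  · obtain ⟨⟨c, r⟩, hY, hr⟩ := h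
    rw [hY.circumradius_eq hr, (hY.smul hu).circumradius_eq (by positivity)]
  · have h' : ¬ ∃ p : E × ℝ, IsCircum (u • Y) p.1 p.2 ∧ 0 ≤ p.2 := by
      rintro ⟨⟨c, r⟩, hY, hr⟩
      refine h ⟨(u⁻¹ • c, u⁻¹ * r), ?_, by positivity⟩
      simpa [smul_smul, hu.ne'] using hY.smul (inv_pos.2 hu)
    simp [circumradius, circumData, h, h']

theorem exists_isCircum_of_affineIndependent (hfin : Y.Finite) (hne : Y.Nonempty)
    (hY : AffineIndependent ℝ ((↑) : Y → E)) : ∃ K ρ, IsCircum Y K ρ ∧ 0 ≤ ρ := by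
  have : Finite Y := hfin.to_subtype
  have : Nonempty Y := hne.to_subtype
  obtain ⟨s, ⟨hs, hsub⟩, -⟩ := hY.existsUnique_dist_eq
  rw [Subtype.range_coe] at hs hsub
  obtain ⟨y, hy⟩ := hne
  refine ⟨s.center, s.radius, ⟨hs, fun z hz ↦ ?_⟩, ?_⟩
  · rw [dist_comm]; exact hsub hz
  · rw [← show dist y s.center = s.radius from hsub hy]; exact dist_nonneg

end Circumsphere

section SimilarityEmbedding

variable {E : Type*} [NormedAddCommGroup E] [InnerProductSpace ℝ E] {Y : Set E} {K y' : E}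
  {ρ u : ℝ}

theorem AffineIndependent.insert_of_notMem_affineSpan
    (hY : AffineIndependent ℝ ((↑) : Y → E)) (hy' : y' ∉ affineSpan ℝ Y) :
    AffineIndependent ℝ ((↑) : ↥(insert y' Y) → E) := by
  have hsub : ∀ x : {x : ↥(insert y' Y) // x ≠ ⟨y', Set.mem_insert _ _⟩}, (x : E) ∈ Y :=
    fun ⟨⟨x, hx⟩, hne⟩ ↦ hx.resolve_left fun h ↦ hne (Subtype.ext h)
  refine AffineIndependent.affineIndependent_of_notMem_span (i := ⟨y', Set.mem_insert _ _⟩)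
    (AffineIndependent.of_set_of_injective (hY.mono ?_) ?_) fun h ↦ hy' ?_
  · rintro _ ⟨x, rfl⟩
    exact hsub x
  · exact fun x z h ↦ Subtype.ext (Subtype.ext h)
  · refine affineSpan_mono ℝ ?_ h
    rintro _ ⟨x, hx, rfl⟩
    exact hsub ⟨x, hx⟩

theorem AffineIndependent.smul_set (hu : u ≠ 0) (hY : AffineIndependent ℝ ((↑) : Y → E)) :
    AffineIndependent ℝ ((↑) : ↥(u • Y) → E) := by
  have h := (AffineEquiv.affineIndependent_set_of_eq_iff
    (LinearEquiv.smulOfNeZero ℝ E u hu).toAffineEquiv).2 hY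
  rwa [show ⇑(LinearEquiv.smulOfNeZero ℝ E u hu).toAffineEquiv '' Y = u • Y from
    Set.image_smul] at h

theorem norm_smul_sub_smul_sq (u : ℝ) (x z : E) : ‖u • x - u • z‖ ^ 2 = u ^ 2 * ‖x - z‖ ^ 2 := by
  rw [← smul_sub, norm_smul, Real.norm_eq_abs, mul_pow, sq_abs]

theorem triSim_smul_iff {a b c : E} (hu : u ≠ 0) :
    TriSim (u • a) (u • b) (u • c) ↔
      u ^ 2 / 4 * (‖a - b‖ ^ 2 * ‖b - c‖ ^ 2) ≤ ⟪b - a, b - c⟫ := by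
  have hac : ‖a - c‖ ^ 2 = ‖a - b‖ ^ 2 + ‖b - c‖ ^ 2 - 2 * ⟪b - a, b - c⟫ := by
    rw [← sub_add_sub_cancel a b c, norm_add_sq_real, ← neg_sub b a, inner_neg_left]
    ring
  rw [TriSim, norm_smul_sub_smul_sq, norm_smul_sub_smul_sq, norm_smul_sub_smul_sq, hac]
  have hu2 : 0 < u ^ 2 := by positivity
  constructor <;> intro h <;> nlinarith

theorem TriSim.smul {a b c : E} (h : TriSim a b c) (hu0 : 0 < u) (hu1 : u ≤ 1) :
    TriSim (u • a) (u • b) (u • c) := by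
  rw [← one_smul ℝ a, ← one_smul ℝ b, ← one_smul ℝ c, triSim_smul_iff one_ne_zero] at h
  rw [triSim_smul_iff hu0.ne']
  have : u ^ 2 ≤ 1 := pow_le_one₀ hu0.le hu1
  nlinarith [mul_nonneg (sq_nonneg ‖a - b‖) (sq_nonneg ‖b - c‖)]

theorem notMem_affineSpan_of_inner_eq_zero (horth : ∀ y ∈ Y, ⟪y' - K, K - y⟫ = 0)
    (hy' : y' ≠ K) : y' ∉ affineSpan ℝ Y := by
  intro hmem
  obtain ⟨y, hy⟩ := (affineSpan_nonempty (k := ℝ)).1 ⟨y', hmem⟩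
  have h := Submodule.inner_left_of_mem_orthogonal
    (vsub_mem_vectorSpan_of_mem_affineSpan_of_mem_affineSpan hmem (mem_affineSpan ℝ hy))
    (mem_orthogonal_vectorSpan_of_inner_eq_zero horth)
  rw [vsub_eq_sub, ← sub_add_sub_cancel y' K y, inner_add_right, horth y hy, add_zero,
    real_inner_self_eq_norm_sq, sq_eq_zero_iff, norm_eq_zero, sub_eq_zero] at h
  exact hy' h

theorem sq_sub_sq_le_inner_sub_sub {a c : E} (ha : dist K a = ρ) (hc : dist K c = ρ)
    (hoa : ⟪y' - K, K - a⟫ = 0) (hoc : ⟪y' - K, K - c⟫ = 0) :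
    ‖y' - K‖ ^ 2 - ρ ^ 2 ≤ ⟪y' - a, y' - c⟫ := by
  have hac : -(ρ * ρ) ≤ ⟪K - a, K - c⟫ := by
    have h := neg_le_of_abs_le (abs_real_inner_le_norm (K - a) (K - c))
    rwa [← dist_eq_norm, ← dist_eq_norm, ha, hc] at h
  rw [← sub_add_sub_cancel y' K a, ← sub_add_sub_cancel y' K c, inner_add_left, inner_add_right,
    inner_add_right, real_inner_self_eq_norm_sq, hoc, real_inner_comm (y' - K) (K - a), hoa]
  linarith

theorem inner_sub_sub_eq_half_sq {b c : E} (hb : dist K b = ρ) (hc : dist K c = ρ)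
    (hob : ⟪y' - K, K - b⟫ = 0) (hoc : ⟪y' - K, K - c⟫ = 0) :
    ⟪b - y', b - c⟫ = ‖b - c‖ ^ 2 / 2 := by
  have hperp : ⟪y' - K, b - c⟫ = 0 := by
    rw [← sub_sub_sub_cancel_left c b K, inner_sub_right, hoc, hob, sub_zero]
  have hKc := norm_add_sq_real (K - b) (b - c)
  rw [sub_add_sub_cancel, ← dist_eq_norm K c, ← dist_eq_norm K b, hb, hc] at hKc
  rw [← sub_sub_sub_cancel_right b y' K, inner_sub_left, hperp, ← neg_sub K b, inner_neg_left]
  linarith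

theorem norm_smul_sub_smul_sq_lt_two (hpair : ∀ y ∈ Y, ∀ z ∈ Y, ‖y - z‖ ^ 2 < 2)
    (hYK : ∀ y ∈ Y, dist K y = ρ) (horth : ∀ y ∈ Y, ⟪y' - K, K - y⟫ = 0) (hu0 : 0 < u)
    (hu1 : u ≤ 1) (hD : u ^ 2 * (‖y' - K‖ ^ 2 + ρ ^ 2) < 2) {x z : E} (hx : x ∈ insert y' Y)
    (hz : z ∈ insert y' Y) : ‖u • x - u • z‖ ^ 2 < 2 := by
  have hapex : ∀ y ∈ Y, ‖y' - y‖ ^ 2 = ‖y' - K‖ ^ 2 + ρ ^ 2 :=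
    fun y hy ↦ norm_sub_sq_of_inner_eq_zero (hYK y hy) (horth y hy)
  have hu2 : u ^ 2 ≤ 1 := pow_le_one₀ hu0.le hu1
  rw [norm_smul_sub_smul_sq]
  rcases hx with hx | hx <;> rcases hz with hz | hz
  · simp [hx, hz]
  · rwa [hx, hapex z hz]
  · rwa [hz, norm_sub_rev, hapex x hx]
  · nlinarith [hpair x hx z hz, sq_nonneg ‖x - z‖]

theorem triSim_smul_of_mem_insert (htri : ∀ a ∈ Y, ∀ b ∈ Y, ∀ c ∈ Y, TriSim a b c)
    (hYK : ∀ y ∈ Y, dist K y = ρ) (horth : ∀ y ∈ Y, ⟪y' - K, K - y⟫ = 0) (hu0 : 0 < u)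
    (hu1 : u ≤ 1) (hD : u ^ 2 * (‖y' - K‖ ^ 2 + ρ ^ 2) ≤ 2)
    (happ : u ^ 2 * (‖y' - K‖ ^ 2 + ρ ^ 2) ^ 2 ≤ 4 * (‖y' - K‖ ^ 2 - ρ ^ 2)) {a b c : E}
    (ha : a ∈ insert y' Y) (hb : b ∈ insert y' Y) (hc : c ∈ insert y' Y) :
    TriSim (u • a) (u • b) (u • c) := by
  have hapex : ∀ y ∈ Y, ‖y' - y‖ ^ 2 = ‖y' - K‖ ^ 2 + ρ ^ 2 :=
    fun y hy ↦ norm_sub_sq_of_inner_eq_zero (hYK y hy) (horth y hy)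
  have hbase : ∀ b ∈ Y, ∀ c ∈ Y, ⟪b - y', b - c⟫ = ‖b - c‖ ^ 2 / 2 := fun b hb c hc ↦
    inner_sub_sub_eq_half_sq (hYK b hb) (hYK c hc) (horth b hb) (horth c hc)
  rw [triSim_smul_iff hu0.ne']
  rcases hb with hb | hb
  · subst b
    rcases ha with ha | ha
    · simp [ha]
    rcases hc with hc | hc
    · simp [hc]
    rw [norm_sub_rev, hapex a ha, hapex c hc]
    nlinarith [sq_sub_sq_le_inner_sub_sub (hYK a ha) (hYK c hc) (horth a ha) (horth c hc)]
  have hb' : ‖b - y'‖ ^ 2 = ‖y' - K‖ ^ 2 + ρ ^ 2 := by rw [norm_sub_rev, hapex b hb]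
  rcases ha with ha | ha <;> rcases hc with hc | hc
  · subst a c
    rw [real_inner_self_eq_norm_sq, norm_sub_rev, hb']
    nlinarith [sq_nonneg (‖y' - K‖ ^ 2 + ρ ^ 2)]
  · subst a
    rw [norm_sub_rev, hb', hbase b hb c hc]
    nlinarith [sq_nonneg ‖b - c‖]
  · subst c
    rw [real_inner_comm, hb', hbase b hb a ha, norm_sub_rev a]
    nlinarith [sq_nonneg ‖b - a‖]
  · exact (triSim_smul_iff hu0.ne').1 ((htri a ha b hb c hc).smul hu0 hu1)

theorem IsSimEmb.smul_insert (hY : IsSimEmb Y) (hYK : ∀ y ∈ Y, dist K y = ρ)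
    (horth : ∀ y ∈ Y, ⟪y' - K, K - y⟫ = 0) (hy' : y' ≠ K) (hu0 : 0 < u) (hu1 : u ≤ 1)
    (hD : u ^ 2 * (‖y' - K‖ ^ 2 + ρ ^ 2) < 2)
    (happ : u ^ 2 * (‖y' - K‖ ^ 2 + ρ ^ 2) ^ 2 ≤ 4 * (‖y' - K‖ ^ 2 - ρ ^ 2))
    (hrad : u * circumradius (insert y' Y) < 1) : IsSimEmb (u • insert y' Y) := by
  obtain ⟨hfin, hind, hpair, -, htri⟩ := hY
  refine ⟨(hfin.insert y').smul_set,
    (hind.insert_of_notMem_affineSpan (notMem_affineSpan_of_inner_eq_zero horth hy')).smul_set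
      hu0.ne', ?_, by rwa [circumradius_smul hu0], ?_⟩
  · rintro _ ⟨x, hx, rfl⟩ _ ⟨z, hz, rfl⟩
    exact norm_smul_sub_smul_sq_lt_two hpair hYK horth hu0 hu1 hD hx hz
  · rintro _ ⟨a, ha, rfl⟩ _ ⟨b, hb, rfl⟩ _ ⟨c, hc, rfl⟩
    exact triSim_smul_of_mem_insert htri hYK horth hu0 hu1 hD.le happ ha hb hc

end SimilarityEmbedding

section PushedPoint

variable {E : Type*} [NormedAddCommGroup E] [InnerProductSpace ℝ E] {Y₁ Y₂ : Set E} {K y' : E}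
  {ρ : ℝ}

theorem circumradius_singleton (x : E) : circumradius ({x} : Set E) = 0 :=
  IsCircum.circumradius_eq ⟨mem_affineSpan ℝ rfl, by simp⟩ le_rfl

theorem exists_circumradius_insert_of_subset (hsub : Y₁ ⊆ Y₂) (hfin : Y₁.Finite)
    (hind : AffineIndependent ℝ ((↑) : Y₁ → E)) (hne : Y₁.Nonempty) (hY₂ : IsCircum Y₂ K ρ)
    (hv : y' - K ∈ (vectorSpan ℝ Y₂)ᗮ) (hy' : y' ≠ K) :
    ∃ L₁ ρ₁, ‖y' - K‖ ≤ L₁ ∧ L₁ ^ 2 + ρ₁ ^ 2 = ‖y' - K‖ ^ 2 + ρ ^ 2 ∧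
      circumradius Y₁ = ρ₁ ∧ circumradius (insert y' Y₁) = (L₁ ^ 2 + ρ₁ ^ 2) / (2 * L₁) := by
  obtain ⟨K₁, ρ₁, hY₁, hρ₁⟩ := exists_isCircum_of_affineIndependent hfin hne hind
  have hv₁ : y' - K₁ ∈ (vectorSpan ℝ Y₁)ᗮ := by
    rw [← sub_add_sub_cancel y' K K₁]
    exact add_mem (Submodule.orthogonal_le (vectorSpan_mono ℝ hsub) hv)
      (sub_mem_orthogonal_vectorSpan_of_dist_eq hY₁.2 fun y hy ↦ hY₂.2 y (hsub hy))
  have hKK₁ : ⟪y' - K, K - K₁⟫ = 0 := Submodule.inner_left_of_mem_orthogonal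
    (vsub_mem_vectorSpan_of_mem_affineSpan_of_mem_affineSpan hY₂.1
      (affineSpan_mono ℝ hsub hY₁.1)) hv
  have hle : ‖y' - K‖ ≤ ‖y' - K₁‖ := by
    have h := norm_add_sq_real (y' - K) (K - K₁)
    rw [sub_add_sub_cancel, hKK₁] at h
    nlinarith [norm_nonneg (y' - K), norm_nonneg (y' - K₁), sq_nonneg ‖K - K₁‖]
  have hy₁ : y' ≠ K₁ := by
    rintro rfl
    simp [sub_eq_zero] at hle
    exact hy' hle
  obtain ⟨y, hy⟩ := hne
  refine ⟨_, ρ₁, hle, ?_, hY₁.circumradius_eq hρ₁, hY₁.circumradius_insert hv₁ hy₁⟩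
  rw [← norm_sub_sq_of_inner_eq_zero (hY₁.2 y hy) (hY₁.inner_sub_eq_zero hv₁ hy),
    norm_sub_sq_of_inner_eq_zero (hY₂.2 y (hsub hy)) (hY₂.inner_sub_eq_zero hv (hsub hy))]

theorem circumradius_insert_le_of_subset (hsub : Y₁ ⊆ Y₂) (hfin : Y₁.Finite)
    (hind : AffineIndependent ℝ ((↑) : Y₁ → E)) (hY₂ : IsCircum Y₂ K ρ)
    (hv : y' - K ∈ (vectorSpan ℝ Y₂)ᗮ) (hy' : y' ≠ K) :
    circumradius (insert y' Y₁) ≤ circumradius (insert y' Y₂) := by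
  rw [hY₂.circumradius_insert hv hy']
  rcases Y₁.eq_empty_or_nonempty with rfl | hne
  · rw [insert_empty_eq, circumradius_singleton]
    positivity
  obtain ⟨L₁, ρ₁, hle, hD, -, hrad⟩ :=
    exists_circumradius_insert_of_subset hsub hfin hind hne hY₂ hv hy'
  rw [hrad, hD]
  have hL : 0 < ‖y' - K‖ := norm_pos_iff.2 (sub_ne_zero.2 hy')
  gcongr

theorem sq_circumradius_sub_le_of_subset (hsub : Y₁ ⊆ Y₂) (hfin : Y₁.Finite)
    (hind : AffineIndependent ℝ ((↑) : Y₁ → E)) (hY₂ : IsCircum Y₂ K ρ) (hρ : 0 ≤ ρ)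
    (hv : y' - K ∈ (vectorSpan ℝ Y₂)ᗮ) (hy' : y' ≠ K) :
    (ρ ^ 2 - circumradius Y₁ ^ 2) / 4 ≤
      circumradius (insert y' Y₂) ^ 2 - circumradius (insert y' Y₁) ^ 2 := by
  rw [hY₂.circumradius_insert hv hy']
  have hL : 0 < ‖y' - K‖ := norm_pos_iff.2 (sub_ne_zero.2 hy')
  set L := ‖y' - K‖
  rcases Y₁.eq_empty_or_nonempty with rfl | hne
  · rw [insert_empty_eq, circumradius_singleton]
    have : ρ ≤ (L ^ 2 + ρ ^ 2) / (2 * L) := by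
      rw [le_div_iff₀ (by positivity)]
      nlinarith [sq_nonneg (L - ρ)]
    nlinarith [sq_nonneg (circumradius (∅ : Set E))]
  obtain ⟨L₁, ρ₁, hle, hD, hρ₁, hrad⟩ :=
    exists_circumradius_insert_of_subset hsub hfin hind hne hY₂ hv hy'
  rw [hrad, hD, hρ₁]
  have hL₁ : 0 < L₁ := hL.trans_le hle
  have key : ((L ^ 2 + ρ ^ 2) / (2 * L)) ^ 2 - ((L ^ 2 + ρ ^ 2) / (2 * L₁)) ^ 2 =
      (L ^ 2 + ρ ^ 2) ^ 2 * (L₁ ^ 2 - L ^ 2) / (4 * L ^ 2 * L₁ ^ 2) := by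
    field_simp
    ring
  rw [key, le_div_iff₀ (by positivity)]
  have hLL₁ : L ^ 2 ≤ L₁ ^ 2 := pow_le_pow_left₀ hL.le hle 2
  have hprod : L ^ 2 * L₁ ^ 2 ≤ (L ^ 2 + ρ ^ 2) ^ 2 := by
    nlinarith [sq_nonneg ρ₁, sq_nonneg ρ]
  nlinarith

end PushedPoint

theorem smul_insert_conditions_of_lt {c₃ ρ u : ℝ} (hc₃ : 1 < c₃) (hρ0 : 0 < ρ) (hρ1 : ρ < 1)
    (hu : 0 < u) (hδ : u < (c₃ - 1) / (c₃ ^ 2 + 1)) :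
    u ≤ 1 ∧ u ^ 2 * ((c₃ * ρ) ^ 2 + ρ ^ 2) < 2 ∧
      u ^ 2 * ((c₃ * ρ) ^ 2 + ρ ^ 2) ^ 2 ≤ 4 * ((c₃ * ρ) ^ 2 - ρ ^ 2) ∧
      u * (((c₃ * ρ) ^ 2 + ρ ^ 2) / (2 * (c₃ * ρ))) < 1 := by
  rw [lt_div_iff₀ (by positivity)] at hδ
  have ht : (u * (c₃ ^ 2 + 1)) ^ 2 ≤ (c₃ - 1) ^ 2 := pow_le_pow_left₀ (by positivity) hδ.le 2
  have hρ2 : ρ ^ 2 ≤ 1 := pow_le_one₀ hρ0.le hρ1.le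
  refine ⟨by nlinarith, ?_, ?_, ?_⟩
  · nlinarith
  · have hc : (c₃ - 1) ^ 2 ≤ 4 * (c₃ ^ 2 - 1) := by nlinarith
    calc u ^ 2 * ((c₃ * ρ) ^ 2 + ρ ^ 2) ^ 2 = (u * (c₃ ^ 2 + 1)) ^ 2 * ρ ^ 2 * ρ ^ 2 := by ring
      _ ≤ (c₃ - 1) ^ 2 * ρ ^ 2 * 1 := by gcongr
      _ ≤ 4 * ((c₃ * ρ) ^ 2 - ρ ^ 2) := by nlinarith [mul_le_mul_of_nonneg_right hc (sq_nonneg ρ)]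
  · rw [show ((c₃ * ρ) ^ 2 + ρ ^ 2) / (2 * (c₃ * ρ)) = ρ * (c₃ ^ 2 + 1) / (2 * c₃) by
      field_simp, mul_div_assoc', div_lt_one (by positivity)]
    nlinarith

theorem exists_pushed_point_simEmb_general
    (c₀ c₁ c₂ c₃ : ℝ) (hc₀ : 0 < c₀) (hc₁ : 0 < c₁)
    (hc₀le : c₀ ≤ 1)
    (hc₃gt : c₀⁻¹ + Real.sqrt (c₀⁻¹ ^ 2 - 1) < c₃) :
    ∃ δ₀ > (0 : ℝ), ∃ δ₁ > (0 : ℝ),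
      ∀ (d : ℕ) (Y₁ Y₂ : Set (EuclideanSpace ℝ (Fin (d + 1))))
        (y' : EuclideanSpace ℝ (Fin (d + 1))),
        Y₁ ⊆ Y₂ → IsSimEmb Y₁ → IsSimEmb Y₂ →
        (∀ z ∈ Y₂, z (Fin.last d) = 0) →
        circumradius Y₂ < c₀ →
        c₁ < Real.sqrt (circumradius Y₂ ^ 2 - circumradius Y₁ ^ 2) →
        Metric.diam Y₂ < c₂ * circumradius Y₂ →
        (∀ z₁ ∈ Y₂, ∀ z₂ ∈ Y₂, (inner ℝ (y' - circumcenter Y₂) (z₁ - z₂) : ℝ) = 0) →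
        ‖circumcenter Y₂ - y'‖ = c₃ * circumradius Y₂ →
        δ₀ < Real.sqrt (circumradius (Y₂ ∪ {y'}) ^ 2 - circumradius (Y₁ ∪ {y'}) ^ 2) ∧
          ∀ u : ℝ, 0 < u → u < δ₁ →
            IsSimEmb (u • (Y₁ ∪ {y'})) ∧ IsSimEmb (u • (Y₂ ∪ {y'})) := by
  have hc₃ : 1 < c₃ := ((one_le_inv₀ hc₀).2 hc₀le).trans_lt
    ((le_add_of_nonneg_right (Real.sqrt_nonneg _)).trans_lt hc₃gt)
  refine ⟨c₁ / 2, by positivity, (c₃ - 1) / (c₃ ^ 2 + 1), div_pos (by linarith) (by positivity), ?_⟩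
  intro d Y₁ Y₂ y' hsub hY₁ hY₂ _ _ hgap _ horth hL
  rw [Real.lt_sqrt hc₁.le] at hgap
  have hρ : circumradius Y₂ ≠ 0 := fun h ↦ by
    nlinarith [h ▸ hgap, sq_nonneg (circumradius Y₁), sq_nonneg c₁]
  have hK := isCircum_circumcenter hρ
  have hv := mem_orthogonal_vectorSpan_iff.2 horth
  rw [norm_sub_rev] at hL
  have hy' : y' ≠ circumcenter Y₂ := by
    rw [← sub_ne_zero, ← norm_ne_zero_iff, hL]
    exact mul_ne_zero (by linarith) hρ
  rw [Set.union_singleton, Set.union_singleton]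
  refine ⟨?_, fun u hu hδ ↦ ?_⟩
  · rw [Real.lt_sqrt (by positivity)]
    linarith [sq_circumradius_sub_le_of_subset hsub hY₁.1 hY₁.2.1 hK (circumradius_nonneg _) hv hy']
  obtain ⟨hu1, hD, happ, hrad⟩ := smul_insert_conditions_of_lt hc₃
    ((circumradius_nonneg Y₂).lt_of_ne' hρ) hY₂.2.2.2.1 hu hδ
  rw [← hL, ← hK.circumradius_insert hv hy'] at hrad
  rw [← hL] at hD happ
  have hrad₁ := (mul_le_mul_of_nonneg_left
    (circumradius_insert_le_of_subset hsub hY₁.1 hY₁.2.1 hK hv hy') hu.le).trans_lt hrad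
  exact ⟨hY₁.smul_insert (fun y hy ↦ hK.2 y (hsub hy))
      (fun y hy ↦ hK.inner_sub_eq_zero hv (hsub hy)) hy' hu hu1 hD happ hrad₁,
    hY₂.smul_insert hK.2 (fun y hy ↦ hK.inner_sub_eq_zero hv hy) hy' hu hu1 hD happ hrad⟩

/-- Pushing one extra point `y'` orthogonally above the circumcenter of `Y₂`: for
similarity embeddings `Y₁ ⊆ Y₂ ⊂ ℝ^d ⊂ ℝ^{d+1}` satisfying the stated quantitative
bounds in terms of the positive constants `c₀, c₁, c₂, c₃`, there are `δ₀, δ₁ > 0`,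
depending only on `c₀, c₁, c₂, c₃`, such that `Y₁' = Y₁ ∪ {y'}` and `Y₂' = Y₂ ∪ {y'}`
satisfy `√(ρ_{Y₂'}² − ρ_{Y₁'}²) > δ₀`, and `u • Y₁'` and `u • Y₂'` are similarity
embeddings for all `0 < u < δ₁`. -/
theorem exists_pushed_point_simEmb
    (c₀ c₁ c₂ c₃ : ℝ) (hc₀ : 0 < c₀) (hc₁ : 0 < c₁) (hc₂ : 0 < c₂) (hc₃ : 0 < c₃)
    (hc₀le : c₀ ≤ 1) (hc₂le : c₂ ≤ 2)
    (hc₃gt : c₀⁻¹ + Real.sqrt (c₀⁻¹ ^ 2 - 1) < c₃) :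
    ∃ δ₀ > (0 : ℝ), ∃ δ₁ > (0 : ℝ),
      ∀ (d : ℕ) (Y₁ Y₂ : Set (EuclideanSpace ℝ (Fin (d + 1))))
        (y' : EuclideanSpace ℝ (Fin (d + 1))),
        Y₁ ⊆ Y₂ → IsSimEmb Y₁ → IsSimEmb Y₂ →
        (∀ z ∈ Y₂, z (Fin.last d) = 0) →
        circumradius Y₂ < c₀ →
        c₁ < Real.sqrt (circumradius Y₂ ^ 2 - circumradius Y₁ ^ 2) →
        Metric.diam Y₂ < c₂ * circumradius Y₂ →
        (∀ z₁ ∈ Y₂, ∀ z₂ ∈ Y₂, (inner ℝ (y' - circumcenter Y₂) (z₁ - z₂) : ℝ) = 0) →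
        ‖circumcenter Y₂ - y'‖ = c₃ * circumradius Y₂ →
        δ₀ < Real.sqrt (circumradius (Y₂ ∪ {y'}) ^ 2 - circumradius (Y₁ ∪ {y'}) ^ 2) ∧
          ∀ u : ℝ, 0 < u → u < δ₁ →
            IsSimEmb (u • (Y₁ ∪ {y'})) ∧ IsSimEmb (u • (Y₂ ∪ {y'})) :=
  exists_pushed_point_simEmb_general c₀ c₁ c₂ c₃ hc₀ hc₁ hc₀le hc₃gt
end
end

section
/- There exist a two-point set Y = {y₀, y₁} ⊂ ℝ⁴ with circumradius ρ_Y = ∥y₀−y₁∥/2 and a sequence (Y_n) of five-point similarity embeddings in ℝ⁴, each consisting of four points converging to y₀ and one point converging to y₁ (so that each Y_n is clustered in type ⟨3,0⟩ as a metric space), such that Y_n → Y in Hausdorff distance but the circumradii ρ_{Y_n} converge to a limit strictly greater than ρ_Y. -/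
open Filter Metric

noncomputable section

/-!
For small `s > 0` take the four points `±s e₀` and `±s e₁ + s² (2 e₂ + e₃ / 4)` near
`y₀ = 0`, and `y₁ = e₃`. Lifting the second pair out of the plane of the first is what makes
the tri-similarity inequality hold inside the cluster (it fails for a planar square), and it
also bends the circumsphere: equidistance from the four cluster points forces the center `c`
to satisfy `⟪c, 2 e₂ + e₃ / 4⟫ = O(s²)`, while equidistance from `y₀` and `y₁` gives
`⟪c, e₃⟫ → 1 / 2`. So the circumcenters converge to `(0, 0, -1/16, 1/2)` rather than to the
midpoint of `y₀ y₁`, and the circumradii to `√65 / 16 > 1 / 2`.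
-/

open Topology

section Circumradius

variable {E : Type*} [NormedAddCommGroup E] [InnerProductSpace ℝ E]

theorem circumradius_range_eq {ι : Type*} [Nonempty ι] [Finite ι] {p : ι → E}
    (hp : AffineIndependent ℝ p) {c : E} {ρ : ℝ} (hc : IsCircum (Set.range p) c ρ)
    (hρ : 0 ≤ ρ) : circumradius (Set.range p) = ρ := by
  have toSphere : ∀ {c' : E} {ρ' : ℝ}, IsCircum (Set.range p) c' ρ' →
      c' ∈ affineSpan ℝ (Set.range p) ∧ Set.range p ⊆ sphere c' ρ' :=
    fun h => ⟨h.1, fun y hy => mem_sphere'.2 (h.2 y hy)⟩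
  have hex : ∃ q : E × ℝ, IsCircum (Set.range p) q.1 q.2 ∧ 0 ≤ q.2 :=
    ⟨(c, ρ), hc, hρ⟩
  rw [circumradius, circumData, dif_pos hex]
  exact congrArg EuclideanGeometry.Sphere.radius <|
    hp.existsUnique_dist_eq.unique (y₁ := ⟨_, _⟩) (y₂ := ⟨c, ρ⟩)
      (toSphere hex.choose_spec.1) (toSphere hc)

theorem circumradius_pair {a b : E} (hab : a ≠ b) :
    circumradius ({a, b} : Set E) = dist a b / 2 := by
  have hrange : Set.range ![a, b] = {a, b} := Matrix.range_cons_cons_empty a b ![]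
  rw [← hrange]
  refine circumradius_range_eq (affineIndependent_of_ne ℝ hab)
    (c := midpoint ℝ a b) ⟨?_, ?_⟩ (by positivity)
  · rw [hrange]
    exact AffineMap.lineMap_mem_affineSpan_pair _ a b
  · rintro y ⟨i, rfl⟩
    fin_cases i
    · simp [div_eq_inv_mul]
    · simp [dist_right_midpoint (𝕜 := ℝ), div_eq_inv_mul, dist_comm]

end Circumradius

theorem hausdorffDist_range_le_dist {ι X : Type*} [Fintype ι] [PseudoMetricSpace X]
    (f g : ι → X) : hausdorffDist (Set.range f) (Set.range g) ≤ dist f g := by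
  refine hausdorffDist_le_of_mem_dist dist_nonneg ?_ ?_ <;> rintro _ ⟨i, rfl⟩
  · exact ⟨g i, ⟨i, rfl⟩, dist_le_pi_dist f g i⟩
  · exact ⟨f i, ⟨i, rfl⟩, dist_comm (g i) (f i) ▸ dist_le_pi_dist f g i⟩

theorem tendsto_hausdorffDist_range {α ι X : Type*} [Fintype ι] [PseudoMetricSpace X]
    {l : Filter α} {f : α → ι → X} {g : ι → X} (h : Tendsto f l (𝓝 g)) :
    Tendsto (fun a => hausdorffDist (Set.range (f a)) (Set.range g)) l (𝓝 0) :=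
  squeeze_zero (fun _ => hausdorffDist_nonneg) (fun a => hausdorffDist_range_le_dist (f a) g)
    (tendsto_iff_dist_tendsto_zero.1 h)

theorem neg_log_one_sub_half_lt_iff {d e : ℝ} (hd : d < 2) (he : e < 2) :
    -Real.log (1 - 1 / 2 * d) < -Real.log (1 - 1 / 2 * e) ↔ d < e := by
  rw [neg_lt_neg_iff, Real.log_lt_log_iff (by linarith) (by linarith)]
  constructor <;> intro h <;> linarith

def fivePoints (s : ℝ) : Fin 5 → EuclideanSpace ℝ (Fin 4) :=
  ![!₂[s, 0, 0, 0], !₂[0, s, 2 * s ^ 2, s ^ 2 / 4], !₂[-s, 0, 0, 0],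
    !₂[0, -s, 2 * s ^ 2, s ^ 2 / 4], !₂[0, 0, 0, 1]]

def fivePointsSqDist (s : ℝ) : Fin 5 → Fin 5 → ℝ :=
  let near := 2 * s ^ 2 + 65 / 16 * s ^ 4
  let far := 1 + s ^ 2 / 2 + 65 / 16 * s ^ 4
  ![![0, near, 4 * s ^ 2, near, 1 + s ^ 2],
    ![near, 0, near, 4 * s ^ 2, far],
    ![4 * s ^ 2, near, 0, near, 1 + s ^ 2],
    ![near, 4 * s ^ 2, near, 0, far],
    ![1 + s ^ 2, far, 1 + s ^ 2, far, 0]]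

theorem EuclideanSpace.norm_sub_sq_fin_four (x y : EuclideanSpace ℝ (Fin 4)) :
    ‖x - y‖ ^ 2 = (x 0 - y 0) ^ 2 + (x 1 - y 1) ^ 2 + (x 2 - y 2) ^ 2 + (x 3 - y 3) ^ 2 := by
  simp [EuclideanSpace.norm_sq_eq, Fin.sum_univ_four]

theorem norm_fivePoints_sub_sq (s : ℝ) (i j : Fin 5) :
    ‖fivePoints s i - fivePoints s j‖ ^ 2 = fivePointsSqDist s i j := by
  rw [EuclideanSpace.norm_sub_sq_fin_four]
  fin_cases i <;> fin_cases j <;> simp [fivePoints, fivePointsSqDist] <;> ring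

theorem affineIndependent_fivePoints {s : ℝ} (hs : 0 < s) :
    AffineIndependent ℝ (fivePoints s) := by
  rw [affineIndependent_iff_of_fintype]
  intro w hw hcomb
  rw [Finset.univ.weightedVSub_eq_linear_combination hw] at hcomb
  have coord (k : Fin 4) : ∑ i, w i * fivePoints s i k = 0 := by
    simpa using congrArg (· k) hcomb
  have h0 := coord 0
  have h1 := coord 1
  have h2 := coord 2
  have h3 := coord 3
  simp [Fin.sum_univ_five, fivePoints] at h0 h1 h2 h3 hw
  have hw13 : w 1 + w 3 = 0 := by
    have : (w 1 + w 3) * (2 * s ^ 2) = 0 := by linear_combination h2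
    exact (mul_eq_zero.1 this).resolve_right (by positivity)
  have hw1 : w 1 = w 3 := mul_right_cancel₀ hs.ne' (by linear_combination h1)
  have hw0 : w 0 = w 2 := mul_right_cancel₀ hs.ne' (by linear_combination h0)
  have hw4 : w 4 = 0 := by linear_combination h3 - s ^ 2 / 4 * hw13
  intro i
  fin_cases i <;> dsimp <;> linarith

def fivePointsCenter (s : ℝ) : EuclideanSpace ℝ (Fin 4) :=
  !₂[0, 0, 69 / 64 * s ^ 2 - 1 / 16, (1 - s ^ 2) / 2]

def fivePointsRadius (s : ℝ) : ℝ :=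
  √(s ^ 2 + (69 / 64 * s ^ 2 - 1 / 16) ^ 2 + ((1 - s ^ 2) / 2) ^ 2)

theorem dist_fivePointsCenter (s : ℝ) (i : Fin 5) :
    dist (fivePointsCenter s) (fivePoints s i) = fivePointsRadius s := by
  rw [dist_eq_norm, ← Real.sqrt_sq (norm_nonneg _), EuclideanSpace.norm_sub_sq_fin_four,
    fivePointsRadius]
  congr 1
  fin_cases i <;> simp [fivePoints, fivePointsCenter] <;> ring

theorem continuous_fivePoints : Continuous fivePoints := by
  unfold fivePoints
  fun_prop

theorem continuous_fivePointsRadius : Continuous fivePointsRadius := by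
  unfold fivePointsRadius
  fun_prop

theorem circumradius_fivePoints {s : ℝ} (hs : 0 < s) :
    circumradius (Set.range (fivePoints s)) = fivePointsRadius s := by
  have hind := affineIndependent_fivePoints hs
  have hspan : affineSpan ℝ (Set.range (fivePoints s)) = ⊤ := by
    rw [hind.affineSpan_eq_top_iff_card_eq_finrank_add_one]
    simp
  refine circumradius_range_eq hind (c := fivePointsCenter s)
    ⟨hspan ▸ AffineSubspace.mem_top _ _ _, ?_⟩ (Real.sqrt_nonneg _)
  rintro _ ⟨i, rfl⟩
  exact dist_fivePointsCenter s i

section SmallScale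

variable {s : ℝ}

theorem fivePointsRadius_lt_one (hs0 : 0 < s) (hs : s ≤ 1 / 10) : fivePointsRadius s < 1 := by
  rw [fivePointsRadius, Real.sqrt_lt' one_pos]
  nlinarith [pow_le_pow_left₀ hs0.le hs 2, pow_le_pow_left₀ hs0.le hs 4]

theorem norm_fivePoints_sub_sq_lt_two (hs0 : 0 < s) (hs : s ≤ 1 / 10) (i j : Fin 5) :
    ‖fivePoints s i - fivePoints s j‖ ^ 2 < 2 := by
  have hs2 : s ^ 2 ≤ 1 / 100 := by nlinarith
  have hs4 : s ^ 4 ≤ 1 / 10000 := by nlinarith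
  rw [norm_fivePoints_sub_sq]
  fin_cases i <;> fin_cases j <;> simp [fivePointsSqDist] <;> nlinarith

set_option maxHeartbeats 1000000 in
theorem triSim_fivePoints (hs0 : 0 < s) (hs : s ≤ 1 / 10) (i j k : Fin 5) :
    TriSim (fivePoints s i) (fivePoints s j) (fivePoints s k) := by
  have hs2 : s ^ 2 ≤ 1 / 100 := by nlinarith
  have hs4 : s ^ 4 ≤ s ^ 2 / 100 := by nlinarith
  have hs6 : s ^ 6 ≤ s ^ 4 / 100 := by nlinarith
  have hs8 : s ^ 8 ≤ s ^ 6 / 100 := by nlinarith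
  have : 0 ≤ s ^ 8 := by positivity
  simp only [TriSim, norm_fivePoints_sub_sq]
  fin_cases i <;> fin_cases j <;> fin_cases k <;> simp [fivePointsSqDist] <;> nlinarith

theorem isSimEmb_fivePoints (hs0 : 0 < s) (hs : s ≤ 1 / 10) :
    IsSimEmb (Set.range (fivePoints s)) := by
  refine ⟨Set.finite_range _, (affineIndependent_fivePoints hs0).range, ?_, ?_, ?_⟩
  · rintro _ ⟨i, rfl⟩ _ ⟨j, rfl⟩
    exact norm_fivePoints_sub_sq_lt_two hs0 hs i j
  · exact (circumradius_fivePoints hs0).trans_lt (fivePointsRadius_lt_one hs0 hs)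
  · rintro _ ⟨i, rfl⟩ _ ⟨j, rfl⟩ _ ⟨k, rfl⟩
    exact triSim_fivePoints hs0 hs i j k

theorem norm_fivePoints_sub_sq_lt_iff (hs0 : 0 < s) (hs : s ≤ 1 / 10) (i j : Fin 5) :
    ‖fivePoints s i - fivePoints s j‖ ^ 2 < 5 * s ^ 2 ↔
      (![0, 0, 0, 0, 1] : Fin 5 → Fin 2) i = ![0, 0, 0, 0, 1] j := by
  have hs2 : s ^ 2 ≤ 1 / 100 := by nlinarith
  have hs4 : s ^ 4 ≤ s ^ 2 / 100 := by nlinarith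
  rw [norm_fivePoints_sub_sq]
  fin_cases i <;> fin_cases j <;> simp [fivePointsSqDist] <;> nlinarith

end SmallScale

theorem fivePoints_zero_of_lt_four {i : Fin 5} (hi : (i : ℕ) < 4) :
    fivePoints 0 i = fivePoints 0 0 := by
  fin_cases i <;> simp_all [fivePoints]

theorem range_fivePoints_zero :
    Set.range (fivePoints 0) = {fivePoints 0 0, fivePoints 0 4} := by
  refine subset_antisymm ?_ (Set.insert_subset (Set.mem_range_self 0) (by simp))
  rintro _ ⟨i, rfl⟩
  by_cases hi : (i : ℕ) < 4
  · exact .inl (fivePoints_zero_of_lt_four hi)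
  · exact .inr (congrArg _ (by omega))

theorem norm_fivePoints_zero_sub : ‖fivePoints 0 0 - fivePoints 0 4‖ = 1 := by
  rw [← sq_eq_sq₀ (norm_nonneg _) zero_le_one, norm_fivePoints_sub_sq]
  simp [fivePointsSqDist]

theorem one_half_lt_fivePointsRadius_zero : 1 / 2 < fivePointsRadius 0 := by
  rw [fivePointsRadius, Real.lt_sqrt (by norm_num)]
  norm_num

/-- There exist a two-point set `Y = {y₀, y₁} ⊂ ℝ⁴`, whose circumradius is
`‖y₀ − y₁‖/2`, and a sequence of five-point similarity embeddings `Y_n ⊂ ℝ⁴`, each with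
four points converging to `y₀` and one point converging to `y₁` (so each `Y_n` is
clustered in type `⟨3,0⟩` as a metric space), such that `Y_n → Y` in Hausdorff distance
but the circumradii `ρ_{Y_n}` converge to a limit strictly greater than `ρ_Y`. -/
theorem exists_five_point_simEmb_type_three_zero_counterexample :
    ∃ y₀ y₁ : EuclideanSpace ℝ (Fin 4), y₀ ≠ y₁ ∧
      circumradius ({y₀, y₁} : Set (EuclideanSpace ℝ (Fin 4))) = ‖y₀ - y₁‖ / 2 ∧
      ∃ y : ℕ → Fin 5 → EuclideanSpace ℝ (Fin 4),
        (∀ n, Function.Injective (y n)) ∧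
        (∀ n, IsSimEmb (Set.range (y n))) ∧
        (∀ i : Fin 5, (i : ℕ) < 4 → Tendsto (fun n => y n i) atTop (nhds y₀)) ∧
        Tendsto (fun n => y n 4) atTop (nhds y₁) ∧
        (∀ n, ∃ ε > (0 : ℝ), ∃ f : Fin 5 → Fin 2,
          (∀ i j, -Real.log (1 - (1 / 2) * ‖y n i - y n j‖ ^ 2) < ε ↔ f i = f j) ∧
          ∀ c, (Finset.univ.filter fun i => f i = c).card = (![3, 0] : Fin 2 → ℕ) c + 1) ∧
        Tendsto (fun n => Metric.hausdorffDist (Set.range (y n))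
          ({y₀, y₁} : Set (EuclideanSpace ℝ (Fin 4)))) atTop (nhds 0) ∧
        ∃ ρlim : ℝ,
          circumradius ({y₀, y₁} : Set (EuclideanSpace ℝ (Fin 4))) < ρlim ∧
          Tendsto (fun n => circumradius (Set.range (y n))) atTop (nhds ρlim) := by
  obtain ⟨s, hs0, hs, hlim⟩ : ∃ s : ℕ → ℝ, (∀ n, 0 < s n) ∧ (∀ n, s n ≤ 1 / 10) ∧
      Tendsto s atTop (𝓝 0) := by
    refine ⟨fun n => 1 / ((n : ℝ) + 10), fun n => by positivity, fun n => ?_, ?_⟩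
    · exact one_div_le_one_div_of_le (by norm_num) (le_add_of_nonneg_left n.cast_nonneg)
    · exact tendsto_const_nhds.div_atTop
        (tendsto_atTop_add_const_right _ 10 tendsto_natCast_atTop_atTop)
  have hne : fivePoints 0 0 ≠ fivePoints 0 4 :=
    fun h => by simpa [h] using norm_fivePoints_zero_sub
  have hρ : circumradius ({fivePoints 0 0, fivePoints 0 4} : Set _) = 1 / 2 := by
    rw [circumradius_pair hne, dist_eq_norm, norm_fivePoints_zero_sub]
  have hconv : Tendsto (fun n => fivePoints (s n)) atTop (𝓝 (fivePoints 0)) :=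
    (continuous_fivePoints.tendsto 0).comp hlim
  refine ⟨_, _, hne, by rw [hρ, norm_fivePoints_zero_sub], fun n => fivePoints (s n),
    fun n => (affineIndependent_fivePoints (hs0 n)).injective,
    fun n => isSimEmb_fivePoints (hs0 n) (hs n),
    fun i hi => fivePoints_zero_of_lt_four hi ▸ tendsto_pi_nhds.1 hconv i,
    tendsto_pi_nhds.1 hconv 4, fun n => ?_,
    range_fivePoints_zero ▸ tendsto_hausdorffDist_range hconv,
    _, hρ ▸ one_half_lt_fivePointsRadius_zero, ?_⟩
  · have h5 : 5 * s n ^ 2 < 2 := by nlinarith [hs0 n, hs n]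
    refine ⟨-Real.log (1 - 1 / 2 * (5 * s n ^ 2)), ?_, ![0, 0, 0, 0, 1], fun i j => ?_,
      by decide⟩
    · simpa using
        (neg_log_one_sub_half_lt_iff (d := 0) two_pos h5).2 (by have := hs0 n; positivity)
    · rw [neg_log_one_sub_half_lt_iff (norm_fivePoints_sub_sq_lt_two (hs0 n) (hs n) i j) h5]
      exact norm_fivePoints_sub_sq_lt_iff (hs0 n) (hs n) i j
  · exact ((continuous_fivePointsRadius.tendsto 0).comp hlim).congr
      fun n => (circumradius_fivePoints (hs0 n)).symm
end
end
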